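/- arXiv:2404.01769 — 11 statements merged into one kernel-verified Lean document; each statement's English description precedes it below -/
import Mathlib

section
/- Consider a perturbed discrete-time control system. Suppose there exist a function B : ℝⁿ → ℝ and a constant λ ∈ (0,1] such that: (i) B(s) ≤ 0 for all s ∈ S₀; (ii) B(s) > 0 for all s ∈ S_u; and (iii) B(g(s,δ)) − B(s) + λ·B(s) ≤ 0 for all s ∈ S and all δ ∈ W. Then the system is safe: for every initial state s₀ ∈ S₀ and every noise sequence ω : ℕ → ℝⁿ with ω(t) ∈ W for all t, the trajectory satisfies traj(s₀,ω)(t) ∉ S_u for every t ∈ ℕ. -/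
/-- Trajectory of a perturbed discrete-time control system:
`traj g s₀ ω 0 = s₀` and `traj g s₀ ω (t+1) = g (traj g s₀ ω t) (ω t)`. -/
def traj {n : ℕ} (g : (Fin n → ℝ) → (Fin n → ℝ) → (Fin n → ℝ))
    (s₀ : Fin n → ℝ) (ω : ℕ → Fin n → ℝ) : ℕ → Fin n → ℝ
  | 0 => s₀
  | t + 1 => g (traj g s₀ ω t) (ω t)

/-- Almost-sure (qualitative) safety via a discrete-time barrier certificate. -/
theorem almost_sure_safety
    {n : ℕ} (S S₀ Su W : Set (Fin n → ℝ))
    (g : (Fin n → ℝ) → (Fin n → ℝ) → (Fin n → ℝ))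
    (hS₀S : S₀ ⊆ S) (hSuS : Su ⊆ S) (hdisj : S₀ ∩ Su = ∅)
    (hgS : ∀ s ∈ S, ∀ δ ∈ W, g s δ ∈ S)
    (B : (Fin n → ℝ) → ℝ) (lam : ℝ) (hlam : lam ∈ Set.Ioc (0 : ℝ) 1)
    (hinit : ∀ s ∈ S₀, B s ≤ 0)
    (hunsafe : ∀ s ∈ Su, B s > 0)
    (hdec : ∀ s ∈ S, ∀ δ ∈ W, B (g s δ) - B s + lam * B s ≤ 0) :
    ∀ s₀ ∈ S₀, ∀ ω : ℕ → Fin n → ℝ, (∀ t, ω t ∈ W) →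
      ∀ t : ℕ, traj g s₀ ω t ∉ Su := by
  intro s₀ hs₀ ω hω t
  have key : ∀ t, traj g s₀ ω t ∈ S ∧ B (traj g s₀ ω t) ≤ 0 := by
    intro t
    induction t with
    | zero => exact ⟨hS₀S hs₀, hinit s₀ hs₀⟩
    | succ t ih =>
      refine ⟨hgS _ ih.1 _ (hω t), ?_⟩
      have h := hdec _ ih.1 _ (hω t)
      show B (g (traj g s₀ ω t) (ω t)) ≤ 0
      nlinarith [hlam.2, ih.2]
  intro hu
  exact absurd ((key t).2) (not_le.mpr (hunsafe _ hu))
end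

section
/- Consider a perturbed discrete-time stochastic control system. Suppose there exist a barrier certificate candidate B : ℝⁿ → ℝ and a constant ε ∈ [0,1] such that: (i) B(s) ≥ 0 for all s ∈ S; (ii) B(s) ≤ ε for all s ∈ S₀; (iii) B(s) ≥ 1 for all s ∈ S_u; and (iv) ∫ B(g(s,δ)) dμ(δ) − B(s) ≤ 0 for all s ∈ S \ S_u. Then for every initial state s₀ ∈ S₀, the safety probability over the infinite time horizon is bounded below: ℙ_{s₀}[ traj(s₀,ω)(t) ∉ S_u for all t ∈ ℕ ] ≥ 1 − B(s₀). -/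
open MeasureTheory

/-!
Let `V_T(s)` be the probability that the trajectory from `s` enters `Su` within `T` steps.
Splitting a noise sequence into its first value and the rest identifies `μ^⊗ℕ` with
`μ ⊗ μ^⊗ℕ`, which gives the recursion `V_{T+1}(s) = 1` on `Su` and
`V_{T+1}(s) = ∫ V_T(g s δ) dμ(δ)` off it. Conditions (iii) and (iv) say that `B` is a
supersolution of this recursion, so `V_T ≤ B` on `S` by induction on `T` (the noise lies in
its support `W` almost surely, so the state stays in `S`, where `B ≥ 0`). Letting `T → ∞`
bounds the probability of ever entering `Su` by `B(s₀)`.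
-/

open scoped ENNReal

section ConsSeq

variable {X : Type*}

def consSeq (x : X) (ω : ℕ → X) : ℕ → X
  | 0 => x
  | k + 1 => ω k

theorem measurable_consSeq [MeasurableSpace X] :
    Measurable fun p : X × (ℕ → X) => consSeq p.1 p.2 := by
  refine measurable_pi_lambda _ fun k => ?_
  cases k with
  | zero => exact measurable_fst
  | succ k => exact (measurable_pi_apply k).comp measurable_snd

end ConsSeq

namespace MeasureTheory.Measure

theorem eq_infinitePi_of_pi_range {X : ℕ → Type*} [∀ i, MeasurableSpace (X i)]
    (μ : (i : ℕ) → Measure (X i)) [∀ i, IsProbabilityMeasure (μ i)] {ν : Measure (Π i, X i)}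
    (hν : ∀ (N : ℕ) (t : (i : ℕ) → Set (X i)), (∀ i, MeasurableSet (t i)) →
      ν (Set.pi ↑(Finset.range N) t) = ∏ i ∈ Finset.range N, μ i (t i)) :
    ν = infinitePi μ := by
  classical
  refine eq_infinitePi μ fun s t ht => ?_
  have hs : s ⊆ Finset.range (s.sup id + 1) := fun i hi =>
    Finset.mem_range.2 (Nat.lt_succ_of_le (Finset.le_sup (f := id) hi))
  set t' : (i : ℕ) → Set (X i) := fun i => if i ∈ s then t i else Set.univ
  have hbox : Set.pi ↑s t = Set.pi ↑(Finset.range (s.sup id + 1)) t' := by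
    ext ω
    simp only [Set.mem_pi, Finset.mem_coe, Finset.mem_range, t']
    refine ⟨fun h i _ => ?_, fun h i hi => ?_⟩
    · split_ifs with hi
      exacts [h i hi, Set.mem_univ _]
    · simpa [hi] using h i (Finset.mem_range.1 (hs hi))
  have ht' : ∀ i, MeasurableSet (t' i) := fun i => by
    by_cases hi : i ∈ s <;> simp [t', hi, ht i]
  rw [hbox, hν _ t' ht', ← Finset.prod_subset hs fun i _ hi => by simp [t', hi]]
  exact Finset.prod_congr rfl fun i hi => by simp [t', hi]

variable {X : Type*} [MeasurableSpace X] (μ : Measure X) [IsProbabilityMeasure μ]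

theorem infinitePi_map_consSeq :
    (μ.prod (infinitePi fun _ => μ)).map (fun p => consSeq p.1 p.2) = infinitePi fun _ => μ := by
  refine eq_infinitePi_of_pi_range _ fun N t ht => ?_
  rw [map_apply measurable_consSeq (.pi (Finset.range N).countable_toSet fun i _ => ht i)]
  cases N with
  | zero => simp
  | succ N =>
    have : (fun p : X × (ℕ → X) => consSeq p.1 p.2) ⁻¹' Set.pi ↑(Finset.range (N + 1)) t =
        t 0 ×ˢ Set.pi ↑(Finset.range N) (fun k => t (k + 1)) := by
      ext ⟨x, ω⟩
      simp only [Set.mem_preimage, Set.mem_pi, Finset.coe_range, Set.mem_Iio, Set.mem_prod]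
      rw [Nat.forall_lt_succ_left]
      rfl
    rw [this, prod_prod, infinitePi_pi _ fun i _ => ht _, Finset.prod_range_succ' _ N, mul_comm]

theorem measurePreserving_head_tail :
    MeasurePreserving (fun ω : ℕ → X => (ω 0, fun k => ω (k + 1)))
      (infinitePi fun _ => μ) (μ.prod (infinitePi fun _ => μ)) := by
  have head_tail_consSeq :
      (fun ω : ℕ → X => (ω 0, fun k => ω (k + 1))) ∘ (fun p => consSeq p.1 p.2) = id := rfl
  refine ⟨by fun_prop, ?_⟩
  conv_lhs => rw [← infinitePi_map_consSeq]
  rw [map_map (by fun_prop) measurable_consSeq, head_tail_consSeq, map_id]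

theorem eq_infinitePi_of_fin_cylinders {ν : Measure (ℕ → X)}
    (hν : ∀ (T : ℕ) (A : Fin T → Set X), (∀ i, MeasurableSet (A i)) →
      ν {ω | ∀ i : Fin T, ω (i : ℕ) ∈ A i} = ∏ i, μ (A i)) :
    ν = infinitePi fun _ => μ :=
  eq_infinitePi_of_pi_range _ fun N t ht => by
    rw [← Fin.prod_univ_eq_prod_range, ← hν N (fun i => t i) fun i => ht i]
    congr 1
    ext ω
    simp [Set.mem_pi, Fin.forall_iff]

end MeasureTheory.Measure

section Reach

variable {n : ℕ} (g : (Fin n → ℝ) → (Fin n → ℝ) → (Fin n → ℝ))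

theorem traj_succ' (s : Fin n → ℝ) (ω : ℕ → Fin n → ℝ) :
    ∀ t, traj g s ω (t + 1) = traj g (g s (ω 0)) (fun k => ω (k + 1)) t
  | 0 => rfl
  | t + 1 => congrArg (g · (ω (t + 1))) (traj_succ' s ω t)

theorem measurable_traj (hg : Measurable (Function.uncurry g)) :
    ∀ t, Measurable fun p : (Fin n → ℝ) × (ℕ → Fin n → ℝ) => traj g p.1 p.2 t
  | 0 => measurable_fst
  | t + 1 => hg.comp ((measurable_traj hg t).prodMk ((measurable_pi_apply t).comp measurable_snd))

def reachWithin (Su : Set (Fin n → ℝ)) (T : ℕ) (s : Fin n → ℝ) : Set (ℕ → Fin n → ℝ) :=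
  {ω | ∃ t < T, traj g s ω t ∈ Su}

variable {g} {Su : Set (Fin n → ℝ)}

theorem measurableSet_reachWithin (hg : Measurable (Function.uncurry g)) (hSu : MeasurableSet Su)
    (T : ℕ) : MeasurableSet {p : (Fin n → ℝ) × (ℕ → Fin n → ℝ) | p.2 ∈ reachWithin g Su T p.1} := by
  have h : {p : (Fin n → ℝ) × (ℕ → Fin n → ℝ) | p.2 ∈ reachWithin g Su T p.1} =
      ⋃ t < T, (fun p => traj g p.1 p.2 t) ⁻¹' Su := by
    ext
    simp [reachWithin]
  rw [h]
  exact .iUnion fun t => .iUnion fun _ => measurable_traj g hg t hSu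

theorem reachWithin_succ_of_notMem {s : Fin n → ℝ} (hs : s ∉ Su) (T : ℕ) :
    reachWithin g Su (T + 1) s = (fun ω : ℕ → Fin n → ℝ => (ω 0, fun k => ω (k + 1))) ⁻¹'
      {p | p.2 ∈ reachWithin g Su T (g s p.1)} := by
  ext ω
  simp only [reachWithin, Set.mem_preimage, Set.mem_ofPred_eq, Nat.exists_lt_succ_left, traj_succ']
  exact or_iff_right hs

theorem iUnion_reachWithin (s : Fin n → ℝ) :
    ⋃ T, reachWithin g Su T s = {ω | ∃ t, traj g s ω t ∈ Su} := by
  ext ω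
  simp only [reachWithin, Set.mem_iUnion, Set.mem_ofPred_eq]
  exact ⟨fun ⟨_, t, _, ht⟩ => ⟨t, ht⟩, fun ⟨t, ht⟩ => ⟨t + 1, t, t.lt_succ_self, ht⟩⟩

theorem measurableSet_reach (hg : Measurable (Function.uncurry g)) (hSu : MeasurableSet Su)
    (s : Fin n → ℝ) : MeasurableSet {ω | ∃ t, traj g s ω t ∈ Su} := by
  rw [← iUnion_reachWithin]
  exact .iUnion fun T =>
    (measurableSet_reachWithin hg hSu T).preimage (measurable_const.prodMk measurable_id)

theorem monotone_reachWithin (s : Fin n → ℝ) : Monotone fun T => reachWithin g Su T s :=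
  fun _ _ hTT' _ ⟨t, ht, hts⟩ => ⟨t, ht.trans_le hTT', hts⟩

end Reach

section Barrier

variable {n : ℕ} {g : (Fin n → ℝ) → (Fin n → ℝ) → (Fin n → ℝ)} {S Su : Set (Fin n → ℝ)}
  {μ : Measure (Fin n → ℝ)} [IsProbabilityMeasure μ] {V : (Fin n → ℝ) → ℝ≥0∞}

theorem infinitePi_reachWithin_le (hg : Measurable (Function.uncurry g)) (hSu : MeasurableSet Su)
    (hgS : ∀ s ∈ S, ∀ᵐ δ ∂μ, g s δ ∈ S) (hV_unsafe : ∀ s ∈ Su, 1 ≤ V s)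
    (hV_super : ∀ s ∈ S \ Su, ∫⁻ δ, V (g s δ) ∂μ ≤ V s) (T : ℕ) :
    ∀ s ∈ S, Measure.infinitePi (fun _ => μ) (reachWithin g Su T s) ≤ V s := by
  induction T with
  | zero => intro s _; simp [reachWithin]
  | succ T ih =>
    intro s hs
    by_cases hsu : s ∈ Su
    · exact prob_le_one.trans (hV_unsafe s hsu)
    have hmeas : MeasurableSet {p : (Fin n → ℝ) × (ℕ → Fin n → ℝ) |
        p.2 ∈ reachWithin g Su T (g s p.1)} :=
      (measurableSet_reachWithin hg hSu T).preimage
        ((hg.of_uncurry_left.comp measurable_fst).prodMk measurable_snd)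
    calc Measure.infinitePi (fun _ => μ) (reachWithin g Su (T + 1) s)
        = ∫⁻ δ, Measure.infinitePi (fun _ => μ) (reachWithin g Su T (g s δ)) ∂μ := by
          rw [reachWithin_succ_of_notMem hsu,
            (Measure.measurePreserving_head_tail μ).measure_preimage hmeas.nullMeasurableSet,
            Measure.prod_apply hmeas]
          rfl
      _ ≤ ∫⁻ δ, V (g s δ) ∂μ := by
          refine lintegral_mono_ae ?_
          filter_upwards [hgS s hs] with δ hδ using ih _ hδ
      _ ≤ V s := hV_super s ⟨hs, hsu⟩

theorem infinitePi_reach_le (hg : Measurable (Function.uncurry g)) (hSu : MeasurableSet Su)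
    (hgS : ∀ s ∈ S, ∀ᵐ δ ∂μ, g s δ ∈ S) (hV_unsafe : ∀ s ∈ Su, 1 ≤ V s)
    (hV_super : ∀ s ∈ S \ Su, ∫⁻ δ, V (g s δ) ∂μ ≤ V s) {s : Fin n → ℝ} (hs : s ∈ S) :
    Measure.infinitePi (fun _ => μ) {ω | ∃ t, traj g s ω t ∈ Su} ≤ V s := by
  rw [← iUnion_reachWithin, (monotone_reachWithin s).measure_iUnion]
  exact iSup_le fun T => infinitePi_reachWithin_le hg hSu hgS hV_unsafe hV_super T s hs

theorem one_sub_le_infinitePi_avoid (hg : Measurable (Function.uncurry g))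
    (hSu : MeasurableSet Su) (hgS : ∀ s ∈ S, ∀ᵐ δ ∂μ, g s δ ∈ S)
    (hV_unsafe : ∀ s ∈ Su, 1 ≤ V s) (hV_super : ∀ s ∈ S \ Su, ∫⁻ δ, V (g s δ) ∂μ ≤ V s)
    {s : Fin n → ℝ} (hs : s ∈ S) :
    1 - V s ≤ Measure.infinitePi (fun _ => μ) {ω | ∀ t, traj g s ω t ∉ Su} := by
  have hcompl : {ω | ∀ t, traj g s ω t ∉ Su} = {ω | ∃ t, traj g s ω t ∈ Su}ᶜ := by
    ext
    simp
  rw [hcompl, prob_compl_eq_one_sub (measurableSet_reach hg hSu s)]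
  exact tsub_le_tsub_left (infinitePi_reach_le hg hSu hgS hV_unsafe hV_super hs) 1

end Barrier

theorem lower_bound_infinite_horizon_safety_general
    {n : ℕ} (S S₀ Su W : Set (Fin n → ℝ))
    (g : (Fin n → ℝ) → (Fin n → ℝ) → (Fin n → ℝ))
    (μ : Measure (Fin n → ℝ)) [IsProbabilityMeasure μ]
    (hSu : MeasurableSet Su)
    (hS₀S : S₀ ⊆ S)
    (hg : Measurable (Function.uncurry g))
    -- `W` is the support of the noise distribution `μ`
    (hW : W = {δ | ∀ U : Set (Fin n → ℝ), IsOpen U → δ ∈ U → 0 < μ U})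
    (hgS : ∀ s ∈ S, ∀ δ ∈ W, g s δ ∈ S)
    -- `P` is the countable product measure `μ^⊗ℕ` on noise sequences,
    -- characterized by its values on finite cylinders
    (P : Measure (ℕ → Fin n → ℝ))
    (hP : ∀ (T : ℕ) (A : Fin T → Set (Fin n → ℝ)), (∀ i, MeasurableSet (A i)) →
      P {ω | ∀ i : Fin T, ω (i : ℕ) ∈ A i} = ∏ i, μ (A i))
    -- the barrier certificate candidate: a bounded Borel-measurable function
    (B : (Fin n → ℝ) → ℝ) (hBmeas : Measurable B) (hBbdd : ∃ C, ∀ s, |B s| ≤ C)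
    (hnonneg : ∀ s ∈ S, 0 ≤ B s)
    (hunsafe : ∀ s ∈ Su, 1 ≤ B s)
    (hdec : ∀ s ∈ S \ Su, ∫ δ, B (g s δ) ∂μ - B s ≤ 0) :
    ∀ s₀ ∈ S₀,
      1 - B s₀ ≤ (P {ω | ∀ t : ℕ, traj g s₀ ω t ∉ Su}).toReal := by
  intro s₀ hs₀
  obtain rfl : P = Measure.infinitePi fun _ => μ := Measure.eq_infinitePi_of_fin_cylinders μ hP
  have hW_support : W = μ.support := by
    rw [hW, Measure.support_eq_forall_isOpen]
    exact Set.ext fun δ => forall_congr' fun _ => Imp.swap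
  have hgS_ae : ∀ s ∈ S, ∀ᵐ δ ∂μ, g s δ ∈ S := fun s hs => by
    filter_upwards [Measure.support_mem_ae] with δ hδ using hgS s hs δ (hW_support ▸ hδ)
  obtain ⟨C, hC⟩ := hBbdd
  have hB_super : ∀ s ∈ S \ Su, ∫⁻ δ, ENNReal.ofReal (B (g s δ)) ∂μ ≤ ENNReal.ofReal (B s) := by
    rintro s ⟨hs, hsu⟩
    rw [← ofReal_integral_eq_lintegral_ofReal]
    · exact ENNReal.ofReal_le_ofReal (by linarith [hdec s ⟨hs, hsu⟩])
    · exact .of_bound (hBmeas.comp hg.of_uncurry_left).aestronglyMeasurable C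
        (ae_of_all _ fun δ => hC _)
    · filter_upwards [hgS_ae s hs] with δ hδ using hnonneg _ hδ
  have hsafe := one_sub_le_infinitePi_avoid (V := fun s => ENNReal.ofReal (B s)) hg hSu hgS_ae
    (fun s hs => ENNReal.one_le_ofReal.2 (hunsafe s hs)) hB_super (hS₀S hs₀)
  calc 1 - B s₀ = (1 : ℝ≥0∞).toReal - (ENNReal.ofReal (B s₀)).toReal := by
        rw [ENNReal.toReal_one, ENNReal.toReal_ofReal (hnonneg s₀ (hS₀S hs₀))]
    _ ≤ (1 - ENNReal.ofReal (B s₀)).toReal := ENNReal.le_toReal_sub ENNReal.ofReal_ne_top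
    _ ≤ _ := ENNReal.toReal_mono (measure_ne_top _ _) hsafe

/-- Lower bound on probabilistic safety over the infinite time horizon. -/
theorem lower_bound_infinite_horizon_safety
    {n : ℕ} (S S₀ Su W : Set (Fin n → ℝ))
    (g : (Fin n → ℝ) → (Fin n → ℝ) → (Fin n → ℝ))
    (μ : Measure (Fin n → ℝ)) [IsProbabilityMeasure μ]
    (hS : MeasurableSet S) (hS₀ : MeasurableSet S₀) (hSu : MeasurableSet Su)
    (hS₀S : S₀ ⊆ S) (hSuS : Su ⊆ S) (hdisj : S₀ ∩ Su = ∅)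
    (hg : Measurable (Function.uncurry g))
    -- `W` is the support of the noise distribution `μ`
    (hW : W = {δ | ∀ U : Set (Fin n → ℝ), IsOpen U → δ ∈ U → 0 < μ U})
    (hgS : ∀ s ∈ S, ∀ δ ∈ W, g s δ ∈ S)
    -- `P` is the countable product measure `μ^⊗ℕ` on noise sequences,
    -- characterized by its values on finite cylinders
    (P : Measure (ℕ → Fin n → ℝ)) [IsProbabilityMeasure P]
    (hP : ∀ (T : ℕ) (A : Fin T → Set (Fin n → ℝ)), (∀ i, MeasurableSet (A i)) →
      P {ω | ∀ i : Fin T, ω (i : ℕ) ∈ A i} = ∏ i, μ (A i))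
    -- the barrier certificate candidate: a bounded Borel-measurable function
    (B : (Fin n → ℝ) → ℝ) (hBmeas : Measurable B) (hBbdd : ∃ C, ∀ s, |B s| ≤ C)
    (ε : ℝ) (hε : ε ∈ Set.Icc (0 : ℝ) 1)
    (hnonneg : ∀ s ∈ S, 0 ≤ B s)
    (hinit : ∀ s ∈ S₀, B s ≤ ε)
    (hunsafe : ∀ s ∈ Su, 1 ≤ B s)
    (hdec : ∀ s ∈ S \ Su, ∫ δ, B (g s δ) ∂μ - B s ≤ 0) :
    ∀ s₀ ∈ S₀,
      1 - B s₀ ≤ (P {ω | ∀ t : ℕ, traj g s₀ ω t ∉ Su}).toReal :=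
  lower_bound_infinite_horizon_safety_general S S₀ Su W g μ hSu hS₀S hg hW hgS P hP B hBmeas hBbdd
    hnonneg hunsafe hdec
end

section
/- Consider a perturbed discrete-time stochastic control system. Suppose there exist a barrier certificate candidate B : ℝⁿ → ℝ and constants γ ∈ (0,1) and 0 ≤ ε' < ε ≤ 1 such that: (i) 0 ≤ B(s) ≤ 1 for all s ∈ S; (ii) B(s) ≥ ε for all s ∈ S₀; (iii) B(s) ≤ ε' for all s ∈ S_u; and (iv) B(s) − γ·∫ B(g(s,δ)) dμ(δ) ≤ 0 for all s ∈ S \ S_u. Then for every initial state s₀ ∈ S₀, the safety probability over the infinite time horizon is bounded above: ℙ_{s₀}[ traj(s₀,ω)(t) ∉ S_u for all t ∈ ℕ ] ≤ 1 − B(s₀). -/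
open MeasureTheory

namespace UBIHS

set_option linter.unusedSectionVars false

variable {n : ℕ}

lemma traj_congr (g : (Fin n → ℝ) → (Fin n → ℝ) → (Fin n → ℝ)) (s : Fin n → ℝ)
    {ω ω' : ℕ → Fin n → ℝ} :
    ∀ t, (∀ i < t, ω i = ω' i) → traj g s ω t = traj g s ω' t
  | 0, _ => rfl
  | t + 1, h => by
      simp only [traj, traj_congr g s t (fun i hi => h i (Nat.lt_succ_of_lt hi)),
        h t (Nat.lt_succ_self t)]

lemma traj_shift (g : (Fin n → ℝ) → (Fin n → ℝ) → (Fin n → ℝ)) (s : Fin n → ℝ)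
    (ω : ℕ → Fin n → ℝ) :
    ∀ t, traj g s ω (t + 1) = traj g (g s (ω 0)) (fun k => ω (k + 1)) t
  | 0 => rfl
  | t + 1 => by
      show g (traj g s ω (t+1)) (ω (t+1)) = _
      rw [traj_shift g s ω t]; rfl

lemma measurable_traj {g : (Fin n → ℝ) → (Fin n → ℝ) → (Fin n → ℝ)}
    (hg : Measurable (Function.uncurry g)) :
    ∀ t, Measurable fun p : (Fin n → ℝ) × (ℕ → Fin n → ℝ) => traj g p.1 p.2 t
  | 0 => measurable_fst
  | t + 1 => by
      show Measurable fun p : (Fin n → ℝ) × (ℕ → Fin n → ℝ) =>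
        Function.uncurry g (traj g p.1 p.2 t, p.2 t)
      exact hg.comp ((measurable_traj hg t).prodMk ((measurable_pi_apply t).comp measurable_snd))

/-- Extend a finite noise vector by zero. -/
def ext (T : ℕ) (y : Fin T → Fin n → ℝ) : ℕ → Fin n → ℝ :=
  fun i => if h : i < T then y ⟨i, h⟩ else 0

lemma measurable_ext (T : ℕ) : Measurable (ext (n := n) T) := by
  apply measurable_pi_lambda
  intro i
  unfold ext
  split
  · exact measurable_pi_apply _
  · exact measurable_const

variable {g : (Fin n → ℝ) → (Fin n → ℝ) → (Fin n → ℝ)} (Su : Set (Fin n → ℝ))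
  (μ : Measure (Fin n → ℝ))

/-- Finite-horizon safe event, on finite noise vectors. -/
def D (g : (Fin n → ℝ) → (Fin n → ℝ) → (Fin n → ℝ)) (Su : Set (Fin n → ℝ)) (T : ℕ)
    (s : Fin n → ℝ) : Set (Fin T → Fin n → ℝ) :=
  {y | ∀ t ≤ T, traj g s (ext T y) t ∉ Su}

lemma measurableSet_D_joint (hg : Measurable (Function.uncurry g)) (hSu : MeasurableSet Su)
    (T : ℕ) :
    MeasurableSet {p : (Fin n → ℝ) × (Fin T → Fin n → ℝ) | p.2 ∈ D g Su T p.1} := by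
  have : {p : (Fin n → ℝ) × (Fin T → Fin n → ℝ) | p.2 ∈ D g Su T p.1}
      = ⋂ t ∈ Set.Iic T, (fun p : (Fin n → ℝ) × (Fin T → Fin n → ℝ) =>
          traj g p.1 (ext T p.2) t) ⁻¹' Suᶜ := by
    ext p; simp [D, Set.mem_iInter]
  rw [this]
  refine MeasurableSet.biInter (Set.to_countable _) fun t _ => ?_
  exact ((measurable_traj hg t).comp
    (measurable_fst.prodMk ((measurable_ext T).comp measurable_snd))) hSu.compl

/-- Probability of remaining safe for `T` steps. -/
noncomputable def q (g : (Fin n → ℝ) → (Fin n → ℝ) → (Fin n → ℝ)) (Su : Set (Fin n → ℝ))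
    (μ : Measure (Fin n → ℝ)) (T : ℕ) (s : Fin n → ℝ) : ℝ :=
  (Measure.pi (fun _ : Fin T => μ) (D g Su T s)).toReal

variable [IsProbabilityMeasure μ]

lemma q_nonneg (T : ℕ) (s : Fin n → ℝ) : 0 ≤ q g Su μ T s := ENNReal.toReal_nonneg

lemma q_le_one (T : ℕ) (s : Fin n → ℝ) : q g Su μ T s ≤ 1 := by
  have h := prob_le_one (μ := Measure.pi (fun _ : Fin T => μ)) (s := D g Su T s)
  simpa [q] using ENNReal.toReal_mono ENNReal.one_ne_top h

lemma q_of_mem (T : ℕ) {s : Fin n → ℝ} (hs : s ∈ Su) : q g Su μ T s = 0 := by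
  have : D g Su T s = ∅ := by
    ext y
    simp only [D, Set.mem_setOf_eq, Set.mem_empty_iff_false, iff_false, not_forall]
    exact ⟨0, Nat.zero_le _, by simpa [traj] using hs⟩
  simp [q, this]

lemma measurable_q (hg : Measurable (Function.uncurry g)) (hSu : MeasurableSet Su) (T : ℕ) :
    Measurable (q g Su μ T) := by
  have h := measurable_measure_prodMk_left
    (ν := Measure.pi (fun _ : Fin T => μ)) (measurableSet_D_joint Su hg hSu T)
  exact h.ennreal_toReal

lemma measurableSet_D (hg : Measurable (Function.uncurry g)) (hSu : MeasurableSet Su) (T : ℕ)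
    (s : Fin n → ℝ) : MeasurableSet (D g Su T s) :=
  measurable_prodMk_left (measurableSet_D_joint Su hg hSu T)


lemma q_succ (hg : Measurable (Function.uncurry g)) (hSu : MeasurableSet Su) (T : ℕ)
    {s : Fin n → ℝ} (hs : s ∉ Su) :
    q g Su μ (T + 1) s = ∫ δ, q g Su μ T (g s δ) ∂μ := by
  set ν := Measure.pi (fun _ : Fin T => μ) with hν
  have hDJ := measurableSet_D_joint Su hg hSu T
  set e := MeasurableEquiv.piFinSuccAbove (fun _ : Fin (T + 1) => (Fin n → ℝ)) 0 with he
  set C : Set ((Fin n → ℝ) × (Fin T → Fin n → ℝ)) := {p | p.2 ∈ D g Su T (g s p.1)} with hCdef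
  have hC : MeasurableSet C := by
    have hm : Measurable fun p : (Fin n → ℝ) × (Fin T → Fin n → ℝ) => (g s p.1, p.2) :=
      (hg.comp (measurable_const.prodMk measurable_fst)).prodMk measurable_snd
    exact hm hDJ
  have hext0 : ∀ y : Fin (T + 1) → Fin n → ℝ, ext (T + 1) y 0 = y 0 := by
    intro y; simp [ext]
  have hshift : ∀ y : Fin (T + 1) → Fin n → ℝ,
      (fun k => ext (T + 1) y (k + 1)) = ext T (fun j => y j.succ) := by
    intro y; funext k
    by_cases h : k < T
    · simp only [ext, dif_pos h, dif_pos (Nat.succ_lt_succ h)]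
      congr 1
    · simp only [ext, dif_neg h, dif_neg (fun h' => h (Nat.lt_of_succ_lt_succ h'))]
  have hkey : D g Su (T + 1) s = e ⁻¹' C := by
    ext y
    have he_y : e y = (y 0, fun j => y ((0 : Fin (T+1)).succAbove j)) := rfl
    constructor
    · intro h t ht
      have h0 : ((fun j : Fin T => y ((0 : Fin (T+1)).succAbove j)) : Fin T → Fin n → ℝ)
          = fun j => y j.succ := by
        funext j; rw [Fin.succAbove_zero]
      show traj g (g s (y 0)) (ext T (fun j => y ((0 : Fin (T+1)).succAbove j))) t ∉ Su
      rw [h0, ← hext0 y, ← hshift y, ← traj_shift]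
      exact h (t + 1) (Nat.succ_le_succ ht)
    · intro h t ht
      cases t with
      | zero => exact hs
      | succ t' =>
        rw [traj_shift, hext0 y, hshift y]
        have h0 : ((fun j : Fin T => y ((0 : Fin (T+1)).succAbove j)) : Fin T → Fin n → ℝ)
            = fun j => y j.succ := by
          funext j; rw [Fin.succAbove_zero]
        have this' : traj g (g s (y 0))
            (ext T (fun j => y ((0 : Fin (T+1)).succAbove j))) t' ∉ Su :=
          h t' (Nat.le_of_succ_le_succ ht)
        rw [h0] at this'
        exact this'
  have hmp := measurePreserving_piFinSuccAbove (fun _ : Fin (T + 1) => μ) 0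
  have h1 : Measure.pi (fun _ : Fin (T + 1) => μ) (D g Su (T + 1) s) = (μ.prod ν) C := by
    rw [hkey]
    exact hmp.measure_preimage_equiv C
  have h2 : (μ.prod ν) C = ∫⁻ δ, ν (D g Su T (g s δ)) ∂μ := by
    rw [Measure.prod_apply hC]; rfl
  have hmeas : Measurable fun δ => ν (D g Su T (g s δ)) :=
    (measurable_measure_prodMk_left (ν := ν) hDJ).comp
      (hg.comp (measurable_const.prodMk measurable_id))
  have h3 : ∫ δ, q g Su μ T (g s δ) ∂μ = (∫⁻ δ, ν (D g Su T (g s δ)) ∂μ).toReal := by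
    rw [← integral_toReal hmeas.aemeasurable
      (Filter.Eventually.of_forall fun δ => measure_lt_top ν _)]
    rfl
  rw [q, h1, h2, h3]


lemma ae_mem_support (μ : Measure (Fin n → ℝ)) :
    ∀ᵐ δ ∂μ, ∀ U : Set (Fin n → ℝ), IsOpen U → δ ∈ U → 0 < μ U := by
  obtain ⟨Tc, hTc, hTsub, hTeq⟩ := TopologicalSpace.isOpen_sUnion_countable
    {U : Set (Fin n → ℝ) | IsOpen U ∧ μ U = 0} (fun U hU => hU.1)
  have hN : μ (⋃₀ {U : Set (Fin n → ℝ) | IsOpen U ∧ μ U = 0}) = 0 := by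
    rw [← hTeq]
    exact (measure_sUnion_null_iff hTc).2 fun U hU => (hTsub hU).2
  rw [MeasureTheory.ae_iff]
  refine measure_mono_null (fun δ hδ => ?_) hN
  simp only [Set.mem_setOf_eq, not_forall] at hδ
  obtain ⟨U, hUo, hδU, hU⟩ := hδ
  exact ⟨U, ⟨hUo, by simpa [pos_iff_ne_zero] using hU⟩, hδU⟩

lemma main_ind (hg : Measurable (Function.uncurry g)) (hSu : MeasurableSet Su)
    {S : Set (Fin n → ℝ)}
    (hgW : ∀ s ∈ S, ∀ᵐ δ ∂μ, g s δ ∈ S)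
    {B : (Fin n → ℝ) → ℝ} {γ : ℝ}
    (hBmeas : Measurable B) (hBbdd : ∃ C, ∀ s, |B s| ≤ C)
    (hγ0 : 0 < γ) (hγ1 : γ < 1)
    (hbound : ∀ s ∈ S, B s ∈ Set.Icc (0 : ℝ) 1)
    (hdec : ∀ s ∈ S \ Su, B s - γ * ∫ δ, B (g s δ) ∂μ ≤ 0) :
    ∀ T : ℕ, ∀ s ∈ S, (1 - γ ^ T) * q g Su μ T s ≤ 1 - B s := by
  intro T
  induction T with
  | zero =>
    intro s hs
    simp only [pow_zero, sub_self, zero_mul]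
    linarith [(hbound s hs).2]
  | succ T IH =>
    intro s hs
    by_cases hsu : s ∈ Su
    · rw [q_of_mem Su μ _ hsu, mul_zero]
      linarith [(hbound s hs).2]
    · have hgsm : Measurable (fun δ => g s δ) :=
        hg.comp (measurable_const.prodMk measurable_id)
      have hI : Integrable (fun δ => B (g s δ)) μ := by
        obtain ⟨C, hC⟩ := hBbdd
        exact Integrable.mono' (integrable_const C)
          ((hBmeas.comp hgsm).aestronglyMeasurable)
          (Filter.Eventually.of_forall fun δ => by simpa using hC _)
      have hIq : Integrable (fun δ => q g Su μ T (g s δ)) μ := by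
        refine Integrable.mono' (integrable_const 1)
          (((measurable_q Su μ hg hSu T).comp hgsm).aestronglyMeasurable)
          (Filter.Eventually.of_forall fun δ => ?_)
        rw [Real.norm_eq_abs, abs_of_nonneg (q_nonneg Su μ T _)]
        exact q_le_one Su μ T _
      have hγT0 : (0 : ℝ) ≤ 1 - γ ^ T := by
        have := pow_le_one₀ hγ0.le hγ1.le (n := T)
        linarith
      have hmono : ∫ δ, (1 - γ ^ T) * q g Su μ T (g s δ) ∂μ
          ≤ ∫ δ, (1 - B (g s δ)) ∂μ := by
        refine integral_mono_ae (hIq.const_mul _) ((integrable_const 1).sub hI) ?_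
        filter_upwards [hgW s hs] with δ hδ
        exact IH _ hδ
      have h1 : ∫ δ, (1 - B (g s δ)) ∂μ = 1 - ∫ δ, B (g s δ) ∂μ := by
        rw [integral_sub (integrable_const 1) hI, integral_const]
        simp
      have h2 : ∫ δ, (1 - γ ^ T) * q g Su μ T (g s δ) ∂μ
          = (1 - γ ^ T) * q g Su μ (T + 1) s := by
        rw [integral_const_mul, ← q_succ Su μ hg hSu T hsu]
      have hkey : (1 - γ ^ T) * q g Su μ (T + 1) s ≤ 1 - ∫ δ, B (g s δ) ∂μ := by
        rw [← h1, ← h2]; exact hmono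
      have hq1 : q g Su μ (T + 1) s ≤ 1 := q_le_one Su μ _ _
      have hq0 : 0 ≤ q g Su μ (T + 1) s := q_nonneg Su μ _ _
      have hd := hdec s ⟨hs, hsu⟩
      have hps : γ ^ (T + 1) = γ * γ ^ T := by rw [pow_succ]; ring
      rw [hps]
      nlinarith [mul_le_mul_of_nonneg_left hkey hγ0.le,
        mul_nonneg (sub_nonneg.2 hγ1.le) (sub_nonneg.2 hq1)]

end UBIHS

/-- Upper bound on probabilistic safety over the infinite time horizon. -/
theorem upper_bound_infinite_horizon_safety
    {n : ℕ} (S S₀ Su W : Set (Fin n → ℝ))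
    (g : (Fin n → ℝ) → (Fin n → ℝ) → (Fin n → ℝ))
    (μ : Measure (Fin n → ℝ)) [IsProbabilityMeasure μ]
    (hS : MeasurableSet S) (hS₀ : MeasurableSet S₀) (hSu : MeasurableSet Su)
    (hS₀S : S₀ ⊆ S) (hSuS : Su ⊆ S) (hdisj : S₀ ∩ Su = ∅)
    (hg : Measurable (Function.uncurry g))
    -- `W` is the support of the noise distribution `μ`
    (hW : W = {δ | ∀ U : Set (Fin n → ℝ), IsOpen U → δ ∈ U → 0 < μ U})
    (hgS : ∀ s ∈ S, ∀ δ ∈ W, g s δ ∈ S)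
    -- `P` is the countable product measure `μ^⊗ℕ` on noise sequences,
    -- characterized by its values on finite cylinders
    (P : Measure (ℕ → Fin n → ℝ)) [IsProbabilityMeasure P]
    (hP : ∀ (T : ℕ) (A : Fin T → Set (Fin n → ℝ)), (∀ i, MeasurableSet (A i)) →
      P {ω | ∀ i : Fin T, ω (i : ℕ) ∈ A i} = ∏ i, μ (A i))
    -- the barrier certificate candidate: a bounded Borel-measurable function
    (B : (Fin n → ℝ) → ℝ) (hBmeas : Measurable B) (hBbdd : ∃ C, ∀ s, |B s| ≤ C)
    (γ : ℝ) (hγ : γ ∈ Set.Ioo (0 : ℝ) 1)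
    (ε ε' : ℝ) (hε' : 0 ≤ ε') (hε'ε : ε' < ε) (hε : ε ≤ 1)
    (hbound : ∀ s ∈ S, B s ∈ Set.Icc (0 : ℝ) 1)
    (hinit : ∀ s ∈ S₀, ε ≤ B s)
    (hunsafe : ∀ s ∈ Su, B s ≤ ε')
    (hdec : ∀ s ∈ S \ Su, B s - γ * ∫ δ, B (g s δ) ∂μ ≤ 0) :
    ∀ s₀ ∈ S₀,
      (P {ω | ∀ t : ℕ, traj g s₀ ω t ∉ Su}).toReal ≤ 1 - B s₀ := by
  intro s₀ hs₀
  obtain ⟨hγ0, hγ1⟩ := hγ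
  have hs₀S : s₀ ∈ S := hS₀S hs₀
  have haeW : ∀ᵐ δ ∂μ, δ ∈ W := by rw [hW]; exact UBIHS.ae_mem_support μ
  have hgW : ∀ s ∈ S, ∀ᵐ δ ∂μ, g s δ ∈ S := fun s hs =>
    haeW.mono fun δ hδ => hgS s hs δ hδ
  have hmain := UBIHS.main_ind Su μ hg hSu hgW hBmeas hBbdd hγ0 hγ1 hbound hdec
  set pE := (P {ω | ∀ t : ℕ, traj g s₀ ω t ∉ Su}).toReal with hpE
  have hPE : ∀ T : ℕ, pE ≤ UBIHS.q g Su μ T s₀ := by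
    intro T
    set πT : (ℕ → Fin n → ℝ) → (Fin T → Fin n → ℝ) := fun ω i => ω i with hπT
    have hπTm : Measurable πT :=
      measurable_pi_lambda _ fun i => measurable_pi_apply _
    have hmap : P.map πT = Measure.pi (fun _ : Fin T => μ) := by
      refine (Measure.pi_eq fun A hA => ?_).symm
      rw [Measure.map_apply hπTm (MeasurableSet.univ_pi hA)]
      have hpre : πT ⁻¹' Set.pi Set.univ A = {ω | ∀ i : Fin T, ω (i : ℕ) ∈ A i} := by
        ext ω; simp [πT, Set.mem_pi]
      rw [hpre, hP T A hA]
    have hpre : {ω : ℕ → Fin n → ℝ | ∀ t ≤ T, traj g s₀ ω t ∉ Su}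
        = πT ⁻¹' (UBIHS.D g Su T s₀) := by
      ext ω
      have hc : ∀ t ≤ T, traj g s₀ (UBIHS.ext T (πT ω)) t = traj g s₀ ω t := by
        intro t ht
        refine (UBIHS.traj_congr g s₀ t fun i hi => ?_).symm
        simp [UBIHS.ext, πT, dif_pos (lt_of_lt_of_le hi ht)]
      constructor
      · intro h t ht
        show traj g s₀ (UBIHS.ext T (πT ω)) t ∉ Su
        rw [hc t ht]; exact h t ht
      · intro h t ht
        have h' : traj g s₀ (UBIHS.ext T (πT ω)) t ∉ Su := h t ht
        rwa [hc t ht] at h'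
    have hle : P {ω | ∀ t : ℕ, traj g s₀ ω t ∉ Su}
        ≤ P {ω | ∀ t ≤ T, traj g s₀ ω t ∉ Su} :=
      measure_mono fun ω h t _ => h t
    have hEq : P {ω | ∀ t ≤ T, traj g s₀ ω t ∉ Su}
        = Measure.pi (fun _ : Fin T => μ) (UBIHS.D g Su T s₀) := by
      rw [hpre, ← hmap,
        Measure.map_apply hπTm (UBIHS.measurableSet_D Su hg hSu T s₀)]
    calc pE ≤ (P {ω | ∀ t ≤ T, traj g s₀ ω t ∉ Su}).toReal :=
          ENNReal.toReal_mono (measure_ne_top P _) hle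
      _ = UBIHS.q g Su μ T s₀ := by rw [hEq]; rfl
  have hbd : ∀ T : ℕ, (1 - γ ^ T) * pE ≤ 1 - B s₀ := by
    intro T
    have hγT0 : (0 : ℝ) ≤ 1 - γ ^ T := by
      have := pow_le_one₀ hγ0.le hγ1.le (n := T)
      linarith
    calc (1 - γ ^ T) * pE ≤ (1 - γ ^ T) * UBIHS.q g Su μ T s₀ :=
          mul_le_mul_of_nonneg_left (hPE T) hγT0
      _ ≤ 1 - B s₀ := hmain T s₀ hs₀S
  have hlim : Filter.Tendsto (fun T : ℕ => (1 - γ ^ T) * pE) Filter.atTop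
      (nhds ((1 - 0) * pE)) := by
    exact (Filter.Tendsto.sub tendsto_const_nhds
      (tendsto_pow_atTop_nhds_zero_of_lt_one hγ0.le hγ1)).mul_const pE
  have := le_of_tendsto hlim (Filter.Eventually.of_forall hbd)
  simpa using this
end

section
/- Consider a perturbed discrete-time control system and let k ≥ 1. Suppose there exists a function B : ℝⁿ → ℝ such that: (i) for every s ∈ S₀, every i with 0 ≤ i < k, and every noise tuple Δ ∈ W^i, B(g^i(s,Δ)) ≤ 0; (ii) B(s) > 0 for all s ∈ S_u; and (iii) for every s ∈ S and every noise tuple Δ = (δ₀,…,δ_{k−1}) ∈ W^k, if B(g^i(s,(δ₀,…,δ_{i−1}))) ≤ 0 for all 0 ≤ i < k, then B(g^k(s,Δ)) ≤ 0. Then the system is safe: for every initial state s₀ ∈ S₀ and every noise sequence ω : ℕ → ℝⁿ with ω(t) ∈ W for all t, the trajectory satisfies traj(s₀,ω)(t) ∉ S_u for every t ∈ ℕ. -/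
/-- The `k`-step update map `g^k`: `g⁰(s) = s` and
`g^{i+1}(s,(δ₀,…,δ_i)) = g(g^i(s,(δ₀,…,δ_{i−1})), δ_i)`. -/
def iterUpd {n : ℕ} (g : (Fin n → ℝ) → (Fin n → ℝ) → (Fin n → ℝ)) :
    (k : ℕ) → (Fin n → ℝ) → (Fin k → (Fin n → ℝ)) → (Fin n → ℝ)
  | 0, s, _ => s
  | k + 1, s, Δ => g (iterUpd g k s (fun i => Δ i.castSucc)) (Δ (Fin.last k))

lemma iterUpd_traj {n : ℕ} (g : (Fin n → ℝ) → (Fin n → ℝ) → (Fin n → ℝ))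
    (s₀ : Fin n → ℝ) (ω : ℕ → Fin n → ℝ) :
    ∀ (i m : ℕ), iterUpd g i (traj g s₀ ω m) (fun j => ω (m + j)) = traj g s₀ ω (m + i)
  | 0, m => rfl
  | i + 1, m => by
    show g (iterUpd g i (traj g s₀ ω m) (fun j => ω (m + j.castSucc))) (ω (m + i)) = _
    have : (fun j : Fin i => ω (m + j.castSucc)) = fun j : Fin i => ω (m + j) := rfl
    rw [this, iterUpd_traj g s₀ ω i m]
    rfl

/-- `k`-inductive variant of almost-sure safety. -/
theorem k_inductive_almost_sure_safety
    {n : ℕ} (S S₀ Su W : Set (Fin n → ℝ))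
    (g : (Fin n → ℝ) → (Fin n → ℝ) → (Fin n → ℝ))
    (hS₀S : S₀ ⊆ S) (hSuS : Su ⊆ S) (hdisj : S₀ ∩ Su = ∅)
    (hgS : ∀ s ∈ S, ∀ δ ∈ W, g s δ ∈ S)
    (k : ℕ) (hk : 1 ≤ k) (B : (Fin n → ℝ) → ℝ)
    (hinit : ∀ s ∈ S₀, ∀ i < k, ∀ Δ : Fin i → (Fin n → ℝ), (∀ j, Δ j ∈ W) →
      B (iterUpd g i s Δ) ≤ 0)
    (hunsafe : ∀ s ∈ Su, B s > 0)
    (hind : ∀ s ∈ S, ∀ Δ : Fin k → (Fin n → ℝ), (∀ j, Δ j ∈ W) →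
      (∀ i : ℕ, (hik : i < k) →
        B (iterUpd g i s (fun j : Fin i => Δ (j.castLE hik.le))) ≤ 0) →
      B (iterUpd g k s Δ) ≤ 0) :
    ∀ s₀ ∈ S₀, ∀ ω : ℕ → Fin n → ℝ, (∀ t, ω t ∈ W) →
      ∀ t : ℕ, traj g s₀ ω t ∉ Su := by
  intro s₀ hs₀ ω hω t
  -- trajectory stays in S
  have htrajS : ∀ t, traj g s₀ ω t ∈ S := by
    intro t
    induction t with
    | zero => exact hS₀S hs₀
    | succ t ih => exact hgS _ ih _ (hω t)
  -- B along trajectory is ≤ 0, by strong induction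
  have hBle : ∀ t, B (traj g s₀ ω t) ≤ 0 := by
    intro t
    induction t using Nat.strong_induction_on with
    | _ t ih =>
      rcases lt_or_ge t k with htk | htk
      · have := hinit s₀ hs₀ t htk (fun j => ω j) (fun j => hω j)
        have h0 : iterUpd g t (traj g s₀ ω 0) (fun j => ω (0 + (j : ℕ))) = traj g s₀ ω (0 + t) :=
          iterUpd_traj g s₀ ω t 0
        simp only [Nat.zero_add] at h0
        rw [show (traj g s₀ ω 0) = s₀ from rfl] at h0
        rwa [h0] at this
      · obtain ⟨m, rfl⟩ : ∃ m, t = m + k := ⟨t - k, (Nat.sub_add_cancel htk).symm⟩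
        have := hind (traj g s₀ ω m) (htrajS m) (fun j => ω (m + j)) (fun j => hω _)
          (by
            intro i hik
            have h0 := iterUpd_traj g s₀ ω i m
            have heq : (fun j : Fin i => ω (m + ((j.castLE hik.le : Fin k) : ℕ)))
                = fun j : Fin i => ω (m + (j : ℕ)) := rfl
            rw [heq, h0]
            exact ih (m + i) (by omega))
        rw [iterUpd_traj g s₀ ω k m] at this
        exact this
  intro hu
  exact absurd (hunsafe _ hu) (not_lt.2 (hBle t))
end

section
/- (Validation of the supermartingale condition by discretization.) Suppose every s ∈ S \ S_u lies within ℓ¹-distance τ of some point s̃ ∈ S̃ \ S_u. Set ζ = τ·L_B·(1 + L_f·(1 + L_π)). If for every s̃ ∈ S̃ \ S_u one has ∫ B(f(s̃, π(s̃+δ))) dμ(δ) ≤ B(s̃) − ζ, then for every s ∈ S \ S_u one has ∫ B(f(s, π(s+δ))) dμ(δ) − B(s) ≤ 0. -/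
/-!
The drift `s ↦ ∫ B (f s (pol (s + δ))) dμ(δ) - B s` is Lipschitz in `s` with constant
`LB * (1 + Lf * (1 + Lpi))`: the shift by `δ` preserves the ℓ¹ distance, so the integrand moves by at
most `LB * Lf * (1 + Lpi) * dist1 s s'` pointwise, and `B s` by at most `LB * dist1 s s'`. Hence the
margin `ζ` demanded at a grid point within distance `τ` absorbs the discretization error.
-/

open MeasureTheory

def dist1 {d : ℕ} (x y : Fin d → ℝ) : ℝ := ∑ i, |x i - y i|

lemma dist1_comm {d : ℕ} (x y : Fin d → ℝ) : dist1 x y = dist1 y x := by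
  simp only [dist1, abs_sub_comm]

lemma dist1_add_right {d : ℕ} (x y z : Fin d → ℝ) : dist1 (x + z) (y + z) = dist1 x y := by
  simp only [dist1, Pi.add_apply, add_sub_add_right_eq_sub]

lemma integral_le_integral_add_const {α : Type*} [MeasurableSpace α] {μ : Measure α}
    [IsProbabilityMeasure μ] {g h : α → ℝ} (hg : Integrable g μ) (hh : Integrable h μ) {c : ℝ}
    (hgh : ∀ x, g x ≤ h x + c) : ∫ x, g x ∂μ ≤ (∫ x, h x ∂μ) + c := by
  calc ∫ x, g x ∂μ ≤ ∫ x, (h x + c) ∂μ := integral_mono hg (hh.add (integrable_const c)) hgh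
    _ = (∫ x, h x ∂μ) + c := by
      rw [integral_add hh (integrable_const c), integral_const, probReal_univ, one_smul]

section ClosedLoop

variable {n m : ℕ} {f : (Fin n → ℝ) → (Fin m → ℝ) → (Fin n → ℝ)}
  {pol : (Fin n → ℝ) → (Fin m → ℝ)} {B : (Fin n → ℝ) → ℝ} {Lf Lpi LB : ℝ}

lemma closedLoop_sub_le (hLf0 : 0 ≤ Lf) (hLB0 : 0 ≤ LB)
    (hf : ∀ s s' a a', dist1 (f s a) (f s' a') ≤ Lf * (dist1 s s' + dist1 a a'))
    (hpi : ∀ s s', dist1 (pol s) (pol s') ≤ Lpi * dist1 s s')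
    (hB : ∀ s s', |B s - B s'| ≤ LB * dist1 s s') (s s' δ : Fin n → ℝ) :
    B (f s (pol (s + δ))) - B (f s' (pol (s' + δ))) ≤ LB * (Lf * (1 + Lpi)) * dist1 s s' := by
  have hpol : dist1 (pol (s + δ)) (pol (s' + δ)) ≤ Lpi * dist1 s s' := by
    simpa only [dist1_add_right] using hpi (s + δ) (s' + δ)
  calc B (f s (pol (s + δ))) - B (f s' (pol (s' + δ)))
      ≤ LB * dist1 (f s (pol (s + δ))) (f s' (pol (s' + δ))) := (abs_le.mp (hB _ _)).2
    _ ≤ LB * (Lf * (dist1 s s' + dist1 (pol (s + δ)) (pol (s' + δ)))) := by gcongr; exact hf ..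
    _ ≤ LB * (Lf * (dist1 s s' + Lpi * dist1 s s')) := by gcongr
    _ = LB * (Lf * (1 + Lpi)) * dist1 s s' := by ring

lemma integral_closedLoop_sub_le (hLf0 : 0 ≤ Lf) (hLB0 : 0 ≤ LB)
    (hf : ∀ s s' a a', dist1 (f s a) (f s' a') ≤ Lf * (dist1 s s' + dist1 a a'))
    (hpi : ∀ s s', dist1 (pol s) (pol s') ≤ Lpi * dist1 s s')
    (hB : ∀ s s', |B s - B s'| ≤ LB * dist1 s s')
    {μ : Measure (Fin n → ℝ)} [IsProbabilityMeasure μ]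
    (hint : ∀ s, Integrable (fun δ => B (f s (pol (s + δ)))) μ) (s s' : Fin n → ℝ) :
    (∫ δ, B (f s (pol (s + δ))) ∂μ) - B s
      ≤ (∫ δ, B (f s' (pol (s' + δ))) ∂μ) - B s' + LB * (1 + Lf * (1 + Lpi)) * dist1 s s' := by
  have hI := integral_le_integral_add_const (hint s) (hint s') fun δ =>
    sub_le_iff_le_add'.mp (closedLoop_sub_le hLf0 hLB0 hf hpi hB s s' δ)
  have hBs : B s' - B s ≤ LB * dist1 s s' := by
    simpa only [dist1_comm s'] using (abs_le.mp (hB s' s)).2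
  linarith

end ClosedLoop

theorem validate_supermartingale_condition_general
    {n m : ℕ}
    (f : (Fin n → ℝ) → (Fin m → ℝ) → (Fin n → ℝ))
    (pol : (Fin n → ℝ) → (Fin m → ℝ))
    (B : (Fin n → ℝ) → ℝ)
    (Lf Lpi LB : ℝ) (hLf0 : 0 ≤ Lf) (hLpi0 : 0 ≤ Lpi) (hLB0 : 0 ≤ LB)
    -- Lipschitz continuity w.r.t. the ℓ¹ norms (sum metric on the product)
    (hf : ∀ s s' a a', dist1 (f s a) (f s' a') ≤ Lf * (dist1 s s' + dist1 a a'))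
    (hpi : ∀ s s', dist1 (pol s) (pol s') ≤ Lpi * dist1 s s')
    (hB : ∀ s s', |B s - B s'| ≤ LB * dist1 s s')
    (μ : Measure (Fin n → ℝ)) [IsProbabilityMeasure μ]
    (hint : ∀ s, Integrable (fun δ => B (f s (pol (s + δ)))) μ)
    (S Su Stil : Set (Fin n → ℝ))
    (τ : ℝ)
    -- every state of `S \ Su` is within ℓ¹-distance `τ` of the discretization
    (hcover : ∀ s ∈ S \ Su, ∃ st ∈ Stil \ Su, dist1 s st ≤ τ)
    (hval : ∀ st ∈ Stil \ Su,
      ∫ δ, B (f st (pol (st + δ))) ∂μ ≤ B st - τ * LB * (1 + Lf * (1 + Lpi))) :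
    ∀ s ∈ S \ Su, (∫ δ, B (f s (pol (s + δ))) ∂μ) - B s ≤ 0 := by
  intro s hs
  obtain ⟨st, hst, hdist⟩ := hcover s hs
  have hζ : LB * (1 + Lf * (1 + Lpi)) * dist1 s st ≤ LB * (1 + Lf * (1 + Lpi)) * τ := by
    gcongr
  linarith [integral_closedLoop_sub_le hLf0 hLB0 hf hpi hB hint s st, hval st hst]

/-- Validation of the supermartingale condition by discretization. -/
theorem validate_supermartingale_condition
    {n m : ℕ}
    (f : (Fin n → ℝ) → (Fin m → ℝ) → (Fin n → ℝ))
    (pol : (Fin n → ℝ) → (Fin m → ℝ))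
    (B : (Fin n → ℝ) → ℝ)
    (Lf Lpi LB : ℝ) (hLf0 : 0 ≤ Lf) (hLpi0 : 0 ≤ Lpi) (hLB0 : 0 ≤ LB)
    -- Lipschitz continuity w.r.t. the ℓ¹ norms (sum metric on the product)
    (hf : ∀ s s' a a', dist1 (f s a) (f s' a') ≤ Lf * (dist1 s s' + dist1 a a'))
    (hpi : ∀ s s', dist1 (pol s) (pol s') ≤ Lpi * dist1 s s')
    (hB : ∀ s s', |B s - B s'| ≤ LB * dist1 s s')
    (μ : Measure (Fin n → ℝ)) [IsProbabilityMeasure μ]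
    (hint : ∀ s, Integrable (fun δ => B (f s (pol (s + δ)))) μ)
    (S Su Stil : Set (Fin n → ℝ)) (hSuS : Su ⊆ S) (hStilS : Stil ⊆ S)
    (τ : ℝ) (hτ : 0 < τ)
    -- every state of `S \ Su` is within ℓ¹-distance `τ` of the discretization
    (hcover : ∀ s ∈ S \ Su, ∃ st ∈ Stil \ Su, dist1 s st ≤ τ)
    (hval : ∀ st ∈ Stil \ Su,
      ∫ δ, B (f st (pol (st + δ))) ∂μ ≤ B st - τ * LB * (1 + Lf * (1 + Lpi))) :
    ∀ s ∈ S \ Su, (∫ δ, B (f s (pol (s + δ))) ∂μ) - B s ≤ 0 :=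
  validate_supermartingale_condition_general f pol B Lf Lpi LB hLf0 hLpi0 hLB0 hf hpi hB μ hint S Su
    Stil τ hcover hval
end

section
/- (Validation of the γ-scaled submartingale condition by discretization.) Let γ ∈ (0,1). Suppose every s ∈ S \ S_u lies within ℓ¹-distance τ of some point s̃ ∈ S̃ \ S_u. Set ζ = τ·L_B·(γ·L_f·(1 + L_π) + 1). If for every s̃ ∈ S̃ \ S_u one has B(s̃) − γ·∫ B(f(s̃, π(s̃+δ))) dμ(δ) + ζ ≤ 0, then for every s ∈ S \ S_u one has B(s) − γ·∫ B(f(s, π(s+δ))) dμ(δ) ≤ 0. -/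
open MeasureTheory

/-- Validation of the γ-scaled submartingale condition by discretization. -/
theorem validate_gamma_scaled_submartingale_condition
    {n m : ℕ}
    (f : (Fin n → ℝ) → (Fin m → ℝ) → (Fin n → ℝ))
    (pol : (Fin n → ℝ) → (Fin m → ℝ))
    (B : (Fin n → ℝ) → ℝ)
    (Lf Lpi LB : ℝ) (hLf0 : 0 ≤ Lf) (hLpi0 : 0 ≤ Lpi) (hLB0 : 0 ≤ LB)
    -- Lipschitz continuity w.r.t. the ℓ¹ norms (sum metric on the product)
    (hf : ∀ s s' a a', dist1 (f s a) (f s' a') ≤ Lf * (dist1 s s' + dist1 a a'))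
    (hpi : ∀ s s', dist1 (pol s) (pol s') ≤ Lpi * dist1 s s')
    (hB : ∀ s s', |B s - B s'| ≤ LB * dist1 s s')
    (μ : Measure (Fin n → ℝ)) [IsProbabilityMeasure μ]
    (hint : ∀ s, Integrable (fun δ => B (f s (pol (s + δ)))) μ)
    (S Su Stil : Set (Fin n → ℝ)) (hSuS : Su ⊆ S) (hStilS : Stil ⊆ S)
    (τ : ℝ) (hτ : 0 < τ)
    (γ : ℝ) (hγ : γ ∈ Set.Ioo (0 : ℝ) 1)
    -- every state of `S \ Su` is within ℓ¹-distance `τ` of the discretization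
    (hcover : ∀ s ∈ S \ Su, ∃ st ∈ Stil \ Su, dist1 s st ≤ τ)
    (hval : ∀ st ∈ Stil \ Su,
      B st - γ * (∫ δ, B (f st (pol (st + δ))) ∂μ) +
        τ * LB * (γ * Lf * (1 + Lpi) + 1) ≤ 0) :
    ∀ s ∈ S \ Su, B s - γ * ∫ δ, B (f s (pol (s + δ))) ∂μ ≤ 0 := by
  intro s hs
  obtain ⟨st, hst, hdist⟩ := hcover s hs
  have hval' := hval st hst
  obtain ⟨hγ0, hγ1⟩ := hγ
  -- pointwise bound on the integrands
  have hpt : ∀ δ, |B (f s (pol (s + δ))) - B (f st (pol (st + δ)))|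
      ≤ LB * (Lf * (1 + Lpi) * τ) := by
    intro δ
    have h1 : dist1 (s + δ) (st + δ) = dist1 s st := by
      unfold dist1; congr 1; ext i; simp
    have h2 : dist1 (pol (s + δ)) (pol (st + δ)) ≤ Lpi * dist1 s st := by
      have := hpi (s + δ) (st + δ); rwa [h1] at this
    calc |B (f s (pol (s + δ))) - B (f st (pol (st + δ)))|
        ≤ LB * dist1 (f s (pol (s + δ))) (f st (pol (st + δ))) := hB _ _
      _ ≤ LB * (Lf * (dist1 s st + dist1 (pol (s + δ)) (pol (st + δ)))) := by
          exact mul_le_mul_of_nonneg_left (hf _ _ _ _) hLB0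
      _ ≤ LB * (Lf * (τ + Lpi * τ)) := by
          apply mul_le_mul_of_nonneg_left _ hLB0
          apply mul_le_mul_of_nonneg_left _ hLf0
          have := h2.trans (mul_le_mul_of_nonneg_left hdist hLpi0)
          linarith
      _ = LB * (Lf * (1 + Lpi) * τ) := by ring
  -- bound the difference of integrals
  have hInt : |(∫ δ, B (f s (pol (s + δ))) ∂μ) - ∫ δ, B (f st (pol (st + δ))) ∂μ|
      ≤ LB * (Lf * (1 + Lpi) * τ) := by
    rw [← integral_sub (hint s) (hint st)]
    calc |∫ δ, (B (f s (pol (s + δ))) - B (f st (pol (st + δ)))) ∂μ|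
        ≤ ∫ δ, |B (f s (pol (s + δ))) - B (f st (pol (st + δ)))| ∂μ :=
          by simpa [Real.norm_eq_abs] using norm_integral_le_integral_norm (μ := μ) (fun δ => B (f s (pol (s + δ))) - B (f st (pol (st + δ))))
      _ ≤ ∫ _δ, LB * (Lf * (1 + Lpi) * τ) ∂μ := by
          apply integral_mono ((hint s).sub (hint st)).abs (integrable_const _)
          exact hpt
      _ = LB * (Lf * (1 + Lpi) * τ) := by simp
  have hBdiff : |B s - B st| ≤ LB * τ := by
    calc |B s - B st| ≤ LB * dist1 s st := hB _ _
      _ ≤ LB * τ := mul_le_mul_of_nonneg_left hdist hLB0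
  have h1 := abs_le.mp hInt
  have h2 := abs_le.mp hBdiff
  nlinarith [h1.1, h1.2, h2.1, h2.2]
end

section
/- (Validation of the c-martingale condition by discretization.) Let c ≥ 0. Suppose every s ∈ S lies within ℓ¹-distance τ of some point s̃ ∈ S̃. Set ζ = τ·L_B·(1 + L_f·(1 + L_π)). If for every s̃ ∈ S̃ one has ∫ B(f(s̃, π(s̃+δ))) dμ(δ) − B(s̃) + ζ ≤ c, then for every s ∈ S one has ∫ B(f(s, π(s+δ))) dμ(δ) − B(s) ≤ c. -/
open MeasureTheory

lemma dist1_nonneg {d : ℕ} (x y : Fin d → ℝ) : 0 ≤ dist1 x y :=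
  Finset.sum_nonneg fun _ _ => abs_nonneg _

/-- Validation of the c-martingale condition by discretization. -/
theorem validate_c_martingale_condition
    {n m : ℕ}
    (f : (Fin n → ℝ) → (Fin m → ℝ) → (Fin n → ℝ))
    (pol : (Fin n → ℝ) → (Fin m → ℝ))
    (B : (Fin n → ℝ) → ℝ)
    (Lf Lpi LB : ℝ) (hLf0 : 0 ≤ Lf) (hLpi0 : 0 ≤ Lpi) (hLB0 : 0 ≤ LB)
    -- Lipschitz continuity w.r.t. the ℓ¹ norms (sum metric on the product)
    (hf : ∀ s s' a a', dist1 (f s a) (f s' a') ≤ Lf * (dist1 s s' + dist1 a a'))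
    (hpi : ∀ s s', dist1 (pol s) (pol s') ≤ Lpi * dist1 s s')
    (hB : ∀ s s', |B s - B s'| ≤ LB * dist1 s s')
    (μ : Measure (Fin n → ℝ)) [IsProbabilityMeasure μ]
    (hint : ∀ s, Integrable (fun δ => B (f s (pol (s + δ)))) μ)
    (S Stil : Set (Fin n → ℝ)) (hStilS : Stil ⊆ S)
    (τ : ℝ) (hτ : 0 < τ)
    (c : ℝ) (hc : 0 ≤ c)
    -- every state of `S` is within ℓ¹-distance `τ` of the discretization
    (hcover : ∀ s ∈ S, ∃ st ∈ Stil, dist1 s st ≤ τ)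
    (hval : ∀ st ∈ Stil,
      (∫ δ, B (f st (pol (st + δ))) ∂μ) - B st +
        τ * LB * (1 + Lf * (1 + Lpi)) ≤ c) :
    ∀ s ∈ S, (∫ δ, B (f s (pol (s + δ))) ∂μ) - B s ≤ c := by
  intro s hs
  obtain ⟨st, hstil, hd⟩ := hcover s hs
  set K : ℝ := LB * (Lf * (τ + Lpi * τ)) with hK
  have hpt : ∀ δ, B (f s (pol (s + δ))) ≤ B (f st (pol (st + δ))) + K := by
    intro δ
    have h1 : |B (f s (pol (s + δ))) - B (f st (pol (st + δ)))|
        ≤ LB * dist1 (f s (pol (s + δ))) (f st (pol (st + δ))) := hB _ _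
    have h2 : dist1 (f s (pol (s + δ))) (f st (pol (st + δ)))
        ≤ Lf * (dist1 s st + dist1 (pol (s + δ)) (pol (st + δ))) := hf _ _ _ _
    have h3 : dist1 (pol (s + δ)) (pol (st + δ)) ≤ Lpi * dist1 (s + δ) (st + δ) :=
      hpi _ _
    rw [dist1_add_right] at h3
    have h3' : dist1 (pol (s + δ)) (pol (st + δ)) ≤ Lpi * τ :=
      h3.trans (mul_le_mul_of_nonneg_left hd hLpi0)
    have h4 : dist1 (f s (pol (s + δ))) (f st (pol (st + δ))) ≤ Lf * (τ + Lpi * τ) :=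
      h2.trans (mul_le_mul_of_nonneg_left (by linarith) hLf0)
    have h5 : |B (f s (pol (s + δ))) - B (f st (pol (st + δ)))| ≤ K :=
      h1.trans (hK ▸ mul_le_mul_of_nonneg_left h4 hLB0)
    linarith [(abs_le.mp h5).2]
  have hintK : Integrable (fun δ => B (f st (pol (st + δ))) + K) μ :=
    (hint st).add (integrable_const K)
  have hmono : (∫ δ, B (f s (pol (s + δ))) ∂μ)
      ≤ ∫ δ, (B (f st (pol (st + δ))) + K) ∂μ :=
    integral_mono (hint s) hintK hpt
  have hsplit : (∫ δ, (B (f st (pol (st + δ))) + K) ∂μ)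
      = (∫ δ, B (f st (pol (st + δ))) ∂μ) + K := by
    rw [integral_add (hint st) (integrable_const K), integral_const]
    simp
  have hBs : B st - B s ≤ LB * τ := by
    have := (abs_le.mp (hB st s)).2
    have hd' : dist1 st s ≤ τ := by
      have : dist1 st s = dist1 s st := by
        unfold dist1; congr 1; funext i; rw [abs_sub_comm]
      linarith [this ▸ hd]
    nlinarith [(abs_le.mp (hB st s)).2]
  have hv := hval st hstil
  have hKle : K ≤ LB * (Lf * (τ + Lpi * τ)) := le_of_eq hK
  rw [hsplit] at hmono
  nlinarith [hmono, hv, hBs]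
end

section
/- (Validation of the α-scaled expectation condition by discretization.) Let α > 0 and β ∈ ℝ. Suppose every s ∈ S \ S_u lies within ℓ¹-distance τ of some point s̃ ∈ S̃ \ S_u. Set ζ = α·τ·L_B·L_f·(1 + L_π) + τ·L_B. If for every s̃ ∈ S̃ \ S_u one has α·∫ B(f(s̃, π(s̃+δ))) dμ(δ) − B(s̃) ≤ α·β − ζ, then for every s ∈ S \ S_u one has α·∫ B(f(s, π(s+δ))) dμ(δ) − B(s) ≤ α·β. -/
open MeasureTheory

/-- Validation of the α-scaled expectation condition by discretization. -/
theorem validate_alpha_scaled_expectation_condition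
    {n m : ℕ}
    (f : (Fin n → ℝ) → (Fin m → ℝ) → (Fin n → ℝ))
    (pol : (Fin n → ℝ) → (Fin m → ℝ))
    (B : (Fin n → ℝ) → ℝ)
    (Lf Lpi LB : ℝ) (hLf0 : 0 ≤ Lf) (hLpi0 : 0 ≤ Lpi) (hLB0 : 0 ≤ LB)
    -- Lipschitz continuity w.r.t. the ℓ¹ norms (sum metric on the product)
    (hf : ∀ s s' a a', dist1 (f s a) (f s' a') ≤ Lf * (dist1 s s' + dist1 a a'))
    (hpi : ∀ s s', dist1 (pol s) (pol s') ≤ Lpi * dist1 s s')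
    (hB : ∀ s s', |B s - B s'| ≤ LB * dist1 s s')
    (μ : Measure (Fin n → ℝ)) [IsProbabilityMeasure μ]
    (hint : ∀ s, Integrable (fun δ => B (f s (pol (s + δ)))) μ)
    (S Su Stil : Set (Fin n → ℝ)) (hSuS : Su ⊆ S) (hStilS : Stil ⊆ S)
    (τ : ℝ) (hτ : 0 < τ)
    (α β : ℝ) (hα : 0 < α)
    -- every state of `S \ Su` is within ℓ¹-distance `τ` of the discretization
    (hcover : ∀ s ∈ S \ Su, ∃ st ∈ Stil \ Su, dist1 s st ≤ τ)
    (hval : ∀ st ∈ Stil \ Su,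
      α * (∫ δ, B (f st (pol (st + δ))) ∂μ) - B st ≤
        α * β - (α * τ * LB * Lf * (1 + Lpi) + τ * LB)) :
    ∀ s ∈ S \ Su, α * (∫ δ, B (f s (pol (s + δ))) ∂μ) - B s ≤ α * β := by
  intro s hs
  obtain ⟨st, hst, hdist⟩ := hcover s hs
  have hval' := hval st hst
  -- pointwise bound
  have hpt : ∀ δ, |B (f s (pol (s + δ))) - B (f st (pol (st + δ)))| ≤
      LB * Lf * (1 + Lpi) * τ := by
    intro δ
    calc |B (f s (pol (s + δ))) - B (f st (pol (st + δ)))|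
        ≤ LB * dist1 (f s (pol (s + δ))) (f st (pol (st + δ))) := hB _ _
      _ ≤ LB * (Lf * (dist1 s st + dist1 (pol (s + δ)) (pol (st + δ)))) := by
          exact mul_le_mul_of_nonneg_left (hf _ _ _ _) hLB0
      _ ≤ LB * (Lf * (τ + Lpi * τ)) := by
          apply mul_le_mul_of_nonneg_left _ hLB0
          apply mul_le_mul_of_nonneg_left _ hLf0
          apply add_le_add hdist
          calc dist1 (pol (s + δ)) (pol (st + δ)) ≤ Lpi * dist1 (s + δ) (st + δ) :=
                hpi _ _
            _ = Lpi * dist1 s st := by rw [dist1_add_right]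
            _ ≤ Lpi * τ := mul_le_mul_of_nonneg_left hdist hLpi0
      _ = LB * Lf * (1 + Lpi) * τ := by ring
  -- integral bound
  have hIbound : |(∫ δ, B (f s (pol (s + δ))) ∂μ) - ∫ δ, B (f st (pol (st + δ))) ∂μ| ≤
      LB * Lf * (1 + Lpi) * τ := by
    rw [← integral_sub (hint s) (hint st)]
    calc |∫ δ, (B (f s (pol (s + δ))) - B (f st (pol (st + δ)))) ∂μ|
        ≤ LB * Lf * (1 + Lpi) * τ * (μ Set.univ).toReal := by
          rw [← Real.norm_eq_abs]
          apply norm_integral_le_of_norm_le_const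
          filter_upwards with δ
          exact hpt δ
      _ = LB * Lf * (1 + Lpi) * τ := by simp
  have hBbound : |B st - B s| ≤ LB * τ := by
    calc |B st - B s| ≤ LB * dist1 st s := hB _ _
      _ = LB * dist1 s st := by unfold dist1; simp [abs_sub_comm]
      _ ≤ LB * τ := mul_le_mul_of_nonneg_left hdist hLB0
  have h1 : (∫ δ, B (f s (pol (s + δ))) ∂μ) ≤
      (∫ δ, B (f st (pol (st + δ))) ∂μ) + LB * Lf * (1 + Lpi) * τ := by
    have := (abs_le.mp hIbound).2; linarith
  have h2 : B st ≤ B s + LB * τ := by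
    have := (abs_le.mp hBbound).2; linarith
  nlinarith [mul_le_mul_of_nonneg_left h1 hα.le]
end

section
/- (Validation of the expected-increase condition by discretization.) Let c ≥ 0. Suppose every s ∈ S \ S_u lies within ℓ¹-distance τ of some point s̃ ∈ S̃ \ S_u. Set ζ = τ·L_B·L_f·(1 + L_π) + τ·L_B. If for every s̃ ∈ S̃ \ S_u one has ∫ B(f(s̃, π(s̃+δ))) dμ(δ) − B(s̃) ≥ c + ζ, then for every s ∈ S \ S_u one has ∫ B(f(s, π(s+δ))) dμ(δ) − B(s) ≥ c. -/
open MeasureTheory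

/-- Validation of the expected-increase condition by discretization. -/
theorem validate_expected_increase_condition
    {n m : ℕ}
    (f : (Fin n → ℝ) → (Fin m → ℝ) → (Fin n → ℝ))
    (pol : (Fin n → ℝ) → (Fin m → ℝ))
    (B : (Fin n → ℝ) → ℝ)
    (Lf Lpi LB : ℝ) (hLf0 : 0 ≤ Lf) (hLpi0 : 0 ≤ Lpi) (hLB0 : 0 ≤ LB)
    -- Lipschitz continuity w.r.t. the ℓ¹ norms (sum metric on the product)
    (hf : ∀ s s' a a', dist1 (f s a) (f s' a') ≤ Lf * (dist1 s s' + dist1 a a'))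
    (hpi : ∀ s s', dist1 (pol s) (pol s') ≤ Lpi * dist1 s s')
    (hB : ∀ s s', |B s - B s'| ≤ LB * dist1 s s')
    (μ : Measure (Fin n → ℝ)) [IsProbabilityMeasure μ]
    (hint : ∀ s, Integrable (fun δ => B (f s (pol (s + δ)))) μ)
    (S Su Stil : Set (Fin n → ℝ)) (hSuS : Su ⊆ S) (hStilS : Stil ⊆ S)
    (τ : ℝ) (hτ : 0 < τ)
    (c : ℝ) (hc : 0 ≤ c)
    -- every state of `S \ Su` is within ℓ¹-distance `τ` of the discretization
    (hcover : ∀ s ∈ S \ Su, ∃ st ∈ Stil \ Su, dist1 s st ≤ τ)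
    (hval : ∀ st ∈ Stil \ Su,
      c + (τ * LB * Lf * (1 + Lpi) + τ * LB) ≤
        (∫ δ, B (f st (pol (st + δ))) ∂μ) - B st) :
    ∀ s ∈ S \ Su, c ≤ (∫ δ, B (f s (pol (s + δ))) ∂μ) - B s := by
  have hd1nn : ∀ {d : ℕ} (x y : Fin d → ℝ), 0 ≤ dist1 x y := by
    intro d x y
    exact Finset.sum_nonneg fun i _ => abs_nonneg _
  intro s hs
  obtain ⟨st, hst, hd⟩ := hcover s hs
  have key := hval st hst
  have hshift : ∀ δ : Fin n → ℝ, dist1 (s + δ) (st + δ) = dist1 s st := by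
    intro δ
    unfold dist1
    congr 1
    funext i
    simp [Pi.add_apply]
  have hpt : ∀ δ : Fin n → ℝ,
      ‖B (f s (pol (s + δ))) - B (f st (pol (st + δ)))‖ ≤ τ * LB * Lf * (1 + Lpi) := by
    intro δ
    rw [Real.norm_eq_abs]
    have h1 := hB (f s (pol (s + δ))) (f st (pol (st + δ)))
    have h2 := hf s st (pol (s + δ)) (pol (st + δ))
    have h3 := hpi (s + δ) (st + δ)
    rw [hshift δ] at h3
    have hdnn := hd1nn (f s (pol (s + δ))) (f st (pol (st + δ)))
    have hpnn := hd1nn (pol (s + δ)) (pol (st + δ))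
    have hsnn := hd1nn s st
    have h4 : dist1 (f s (pol (s + δ))) (f st (pol (st + δ))) ≤ Lf * (τ + Lpi * τ) := by
      refine h2.trans ?_
      have : dist1 (pol (s + δ)) (pol (st + δ)) ≤ Lpi * τ :=
        h3.trans (mul_le_mul_of_nonneg_left hd hLpi0)
      nlinarith
    have h5 := h1.trans (mul_le_mul_of_nonneg_left h4 hLB0)
    nlinarith
  have hI : ‖(∫ δ, B (f s (pol (s + δ))) ∂μ) - ∫ δ, B (f st (pol (st + δ))) ∂μ‖ ≤
      τ * LB * Lf * (1 + Lpi) := by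
    rw [← integral_sub (hint s) (hint st)]
    calc ‖∫ δ, (B (f s (pol (s + δ))) - B (f st (pol (st + δ)))) ∂μ‖
        ≤ τ * LB * Lf * (1 + Lpi) * (μ Set.univ).toReal :=
          norm_integral_le_of_norm_le_const (Filter.Eventually.of_forall hpt)
      _ = τ * LB * Lf * (1 + Lpi) := by simp
  have hBs : |B s - B st| ≤ LB * τ := by
    calc |B s - B st| ≤ LB * dist1 s st := hB s st
      _ ≤ LB * τ := mul_le_mul_of_nonneg_left hd hLB0
  rw [Real.norm_eq_abs] at hI
  have h1 := abs_le.1 hI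
  have h2 := abs_le.1 hBs
  nlinarith [h1.1, h1.2, h2.1, h2.2]
end

section
/- (Validation of the ε-decrease (ranking supermartingale) condition by discretization.) Let ε > 0. Suppose every s ∈ S \ S_u lies within ℓ¹-distance τ of some point s̃ ∈ S̃ \ S_u. Set ζ = τ·L_B·(1 + L_f·(1 + L_π)). If for every s̃ ∈ S̃ \ S_u one has ∫ B(f(s̃, π(s̃+δ))) dμ(δ) − B(s̃) ≤ −ε − ζ, then for every s ∈ S \ S_u one has ∫ B(f(s, π(s+δ))) dμ(δ) − B(s) ≤ −ε. -/
open MeasureTheory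

/-- Validation of the ε-decrease (ranking supermartingale) condition by
discretization. -/
theorem validate_epsilon_decrease_condition
    {n m : ℕ}
    (f : (Fin n → ℝ) → (Fin m → ℝ) → (Fin n → ℝ))
    (pol : (Fin n → ℝ) → (Fin m → ℝ))
    (B : (Fin n → ℝ) → ℝ)
    (Lf Lpi LB : ℝ) (hLf0 : 0 ≤ Lf) (hLpi0 : 0 ≤ Lpi) (hLB0 : 0 ≤ LB)
    -- Lipschitz continuity w.r.t. the ℓ¹ norms (sum metric on the product)
    (hf : ∀ s s' a a', dist1 (f s a) (f s' a') ≤ Lf * (dist1 s s' + dist1 a a'))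
    (hpi : ∀ s s', dist1 (pol s) (pol s') ≤ Lpi * dist1 s s')
    (hB : ∀ s s', |B s - B s'| ≤ LB * dist1 s s')
    (μ : Measure (Fin n → ℝ)) [IsProbabilityMeasure μ]
    (hint : ∀ s, Integrable (fun δ => B (f s (pol (s + δ)))) μ)
    (S Su Stil : Set (Fin n → ℝ)) (hSuS : Su ⊆ S) (hStilS : Stil ⊆ S)
    (τ : ℝ) (hτ : 0 < τ)
    (ε : ℝ) (hε : 0 < ε)
    -- every state of `S \ Su` is within ℓ¹-distance `τ` of the discretization
    (hcover : ∀ s ∈ S \ Su, ∃ st ∈ Stil \ Su, dist1 s st ≤ τ)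
    (hval : ∀ st ∈ Stil \ Su,
      (∫ δ, B (f st (pol (st + δ))) ∂μ) - B st ≤
        -ε - τ * LB * (1 + Lf * (1 + Lpi))) :
    ∀ s ∈ S \ Su, (∫ δ, B (f s (pol (s + δ))) ∂μ) - B s ≤ -ε := by
  intro s hs
  obtain ⟨st, hst, hd⟩ := hcover s hs
  have key := hval st hst
  have hd0 : 0 ≤ dist1 s st := Finset.sum_nonneg fun i _ => abs_nonneg _
  -- pointwise bound
  have hpt : ∀ δ, |B (f s (pol (s + δ))) - B (f st (pol (st + δ)))|
      ≤ LB * (Lf * (1 + Lpi)) * τ := by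
    intro δ
    have h1 : dist1 (s + δ) (st + δ) = dist1 s st := by
      simp [dist1, add_sub_add_comm]
    have h2 : dist1 (pol (s + δ)) (pol (st + δ)) ≤ Lpi * τ := by
      calc dist1 (pol (s + δ)) (pol (st + δ)) ≤ Lpi * dist1 (s + δ) (st + δ) :=
            hpi _ _
        _ ≤ Lpi * τ := by rw [h1]; exact mul_le_mul_of_nonneg_left hd hLpi0
    have h3 : dist1 (f s (pol (s + δ))) (f st (pol (st + δ)))
        ≤ Lf * (1 + Lpi) * τ := by
      calc dist1 (f s (pol (s + δ))) (f st (pol (st + δ)))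
          ≤ Lf * (dist1 s st + dist1 (pol (s + δ)) (pol (st + δ))) := hf _ _ _ _
        _ ≤ Lf * (τ + Lpi * τ) := by
            apply mul_le_mul_of_nonneg_left _ hLf0; linarith
        _ = Lf * (1 + Lpi) * τ := by ring
    calc |B (f s (pol (s + δ))) - B (f st (pol (st + δ)))|
        ≤ LB * dist1 (f s (pol (s + δ))) (f st (pol (st + δ))) := hB _ _
      _ ≤ LB * (Lf * (1 + Lpi) * τ) := mul_le_mul_of_nonneg_left h3 hLB0
      _ = LB * (Lf * (1 + Lpi)) * τ := by ring
  have hintdiff : Integrable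
      (fun δ => B (f s (pol (s + δ))) - B (f st (pol (st + δ)))) μ :=
    (hint s).sub (hint st)
  have hIbound : |(∫ δ, B (f s (pol (s + δ))) ∂μ) -
      (∫ δ, B (f st (pol (st + δ))) ∂μ)| ≤ LB * (Lf * (1 + Lpi)) * τ := by
    rw [← integral_sub (hint s) (hint st)]
    calc |∫ δ, (B (f s (pol (s + δ))) - B (f st (pol (st + δ)))) ∂μ|
        ≤ LB * (Lf * (1 + Lpi)) * τ * (μ Set.univ).toReal := by
          rw [← Real.norm_eq_abs]
          apply norm_integral_le_of_norm_le_const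
          filter_upwards with δ
          simpa using hpt δ
      _ = LB * (Lf * (1 + Lpi)) * τ := by simp
  have hBbound : |B st - B s| ≤ LB * τ := by
    calc |B st - B s| ≤ LB * dist1 st s := hB _ _
      _ = LB * dist1 s st := by
          congr 1; simp [dist1, abs_sub_comm]
      _ ≤ LB * τ := mul_le_mul_of_nonneg_left hd hLB0
  rw [abs_le] at hIbound hBbound
  nlinarith [hIbound.1, hIbound.2, hBbound.1, hBbound.2]
end

section
/- (Stopped barrier process is a nonnegative supermartingale.) Suppose B : ℝⁿ → ℝ is a barrier certificate candidate with B(s) ≥ 0 for all s ∈ S and ∫ B(g(s,δ)) dμ(δ) ≤ B(s) for all s ∈ S \ S_u. Fix s₀ ∈ S. On the probability space ((ℝⁿ)^ℕ, μ^⊗ℕ), let ℱ_t be the σ-algebra generated by the coordinate projections ω ↦ ω(0), …, ω(t−1), let κ(ω) = inf{ t ∈ ℕ : traj(s₀,ω)(t) ∈ S_u } (with κ(ω) = ∞ if the trajectory never enters S_u), and define X̃_t(ω) = B( traj(s₀,ω)( min(t, κ(ω)) ) ). Then (X̃_t)_{t∈ℕ} is a nonnegative supermartingale with respect to the filtration (ℱ_t)_{t∈ℕ}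 and the measure μ^⊗ℕ. -/
open MeasureTheory

/-- The filtration on noise sequences in which `ℱ t` is the σ-algebra generated by
the coordinate projections `ω ↦ ω 0, …, ω (t-1)`. -/
def coordFiltration (E : Type*) [MeasurableSpace E] :
    Filtration ℕ (inferInstance : MeasurableSpace (ℕ → E)) where
  seq t := ⨆ (j : ℕ) (_ : j < t),
    MeasurableSpace.comap (fun ω : ℕ → E => ω j) inferInstance
  mono' := by
    intro i j hij
    exact iSup_mono fun k => iSup_mono' fun hk => ⟨lt_of_lt_of_le hk hij, le_rfl⟩
  le' := by
    intro t
    exact iSup_le fun k => iSup_le fun _ => (measurable_pi_apply k).comap_le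

/-- The first hitting time `κ` of the unsafe set `Su` (equal to `∞` if the
trajectory never enters `Su`). -/
noncomputable def hitTime {n : ℕ} (g : (Fin n → ℝ) → (Fin n → ℝ) → (Fin n → ℝ))
    (Su : Set (Fin n → ℝ)) (s₀ : Fin n → ℝ) (ω : ℕ → Fin n → ℝ) : ℕ∞ :=
  sInf {m : ℕ∞ | ∃ t : ℕ, (t : ℕ∞) = m ∧ traj g s₀ ω t ∈ Su}

/-- The stopped barrier process `X̃ t ω = B (traj s₀ ω (min t (κ ω)))`. -/
noncomputable def stoppedBarrier {n : ℕ}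
    (g : (Fin n → ℝ) → (Fin n → ℝ) → (Fin n → ℝ)) (Su : Set (Fin n → ℝ))
    (B : (Fin n → ℝ) → ℝ) (s₀ : Fin n → ℝ) (t : ℕ) (ω : ℕ → Fin n → ℝ) : ℝ :=
  B (traj g s₀ ω (min (t : ℕ∞) (hitTime g Su s₀ ω)).toNat)

/-!
Freezing the dynamics on `Su`, i.e. replacing `g` by `s δ ↦ if s ∈ Su then s else g s δ`, turns
the stopped trajectory into the ordinary trajectory of a Markov chain driven by i.i.d. noise, and
the drift condition then holds on all of `S` (with equality on `Su`, where the chain is frozen).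
The state at time `t` is `ℱ t`-measurable while the noise `ω t` is independent of `ℱ t` with law
`μ`, so integrating `B` of the next state over an event of `ℱ t` amounts to integrating
`δ ↦ B (g s δ) ∂μ` at the current state `s`, which the drift condition bounds by `B s`. Almost
surely every noise lies in the support `W`, so the chain never leaves `S`, where `B ≥ 0`.
-/

open ProbabilityTheory

section Independence

variable {Ω α β E : Type*} {m mΩ : MeasurableSpace Ω} [MeasurableSpace α] [MeasurableSpace β]
  [NormedAddCommGroup E] [NormedSpace ℝ E] {P : Measure Ω} [IsProbabilityMeasure P]
  {X : Ω → α} {Z : Ω → β}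

theorem integral_comp_prod_of_indepFun (hX : AEMeasurable X P) (hZ : AEMeasurable Z P)
    (hXZ : IndepFun X Z P) {f : α × β → E} (hf : Integrable f ((P.map X).prod (P.map Z))) :
    ∫ ω, f (X ω, Z ω) ∂P = ∫ ω, ∫ z, f (X ω, z) ∂(P.map Z) ∂P := by
  have hlaw := hXZ.map_prod_eq_prod_map_map hX hZ
  rw [← integral_map (hX.prodMk hZ) (hlaw ▸ hf.aestronglyMeasurable), hlaw, integral_prod f hf,
    integral_map hX hf.integral_prod_left.aestronglyMeasurable]

theorem setIntegral_comp_prod_of_indep (hm : m ≤ mΩ)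
    (hX : Measurable[m] X) (hZ : Measurable Z) (hind : Indep m (.comap Z ‹_›) P)
    {A : Set Ω} (hA : MeasurableSet[m] A) {f : α × β → E} (hf : StronglyMeasurable f) {C : ℝ}
    (hfC : ∀ p, ‖f p‖ ≤ C) :
    ∫ ω in A, f (X ω, Z ω) ∂P = ∫ ω in A, ∫ z, f (X ω, z) ∂(P.map Z) ∂P := by
  -- Recording membership in `A` as a second coordinate of `X` reduces to the unrestricted case.
  set Y : Ω → α × Prop := fun ω => (X ω, ω ∈ A)
  set F : (α × Prop) × β → E := {p | p.1.2}.indicator fun p => f (p.1.1, p.2)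
  have hY : Measurable[m] Y := hX.prodMk (@measurableSet_setOfPred Ω m (· ∈ A) |>.1 hA)
  have hYZ : IndepFun Y Z P :=
    (IndepFun_iff_Indep Y Z P).2 (indep_of_indep_of_le_left hind hY.comap_le)
  have hF : Integrable F ((P.map Y).prod (P.map Z)) :=
    .of_bound ((hf.comp_measurable (measurable_fst.fst.prodMk measurable_snd)).indicator
        (measurableSet_setOfPred.2 measurable_fst.snd)).aestronglyMeasurable C
      (.of_forall fun p => (norm_indicator_le_norm_self _ p).trans (hfC _))
  calc ∫ ω in A, f (X ω, Z ω) ∂P = ∫ ω, F (Y ω, Z ω) ∂P := by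
        rw [← integral_indicator (hm A hA)]
        rfl
    _ = ∫ ω, ∫ z, F (Y ω, z) ∂(P.map Z) ∂P :=
        integral_comp_prod_of_indepFun (hY.mono hm le_rfl).aemeasurable hZ.aemeasurable hYZ hF
    _ = ∫ ω in A, ∫ z, f (X ω, z) ∂(P.map Z) ∂P := by
        rw [← integral_indicator (hm A hA)]
        congr with ω
        by_cases h : ω ∈ A <;> simp [F, Y, h]

end Independence

section Coordinates

variable {E : Type*} [MeasurableSpace E]

theorem measurable_coordFiltration_apply {j t : ℕ} (hj : j < t) :
    Measurable[coordFiltration E t] fun ω : ℕ → E => ω j :=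
  Measurable.of_comap_le <| le_iSup₂
    (f := fun (j : ℕ) (_ : j < t) => MeasurableSpace.comap (fun ω : ℕ → E => ω j) inferInstance)
    j hj

theorem indep_coordFiltration_comap_apply (μ : Measure E) [IsProbabilityMeasure μ] (t : ℕ) :
    Indep (coordFiltration E t) (.comap (fun ω : ℕ → E => ω t) inferInstance)
      (Measure.infinitePi fun _ => μ) := by
  have hindep := indep_iSup_of_disjoint (fun i => (measurable_pi_apply i).comap_le)
    (iIndepFun_infinitePi (P := fun _ : ℕ => μ) (X := fun _ => id) fun _ => measurable_id).iIndep
    (S := {j | j < t}) (T := {t}) (Set.disjoint_singleton_right.2 (lt_irrefl t))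
  simp only [Set.mem_singleton_iff, iSup_iSup_eq_left] at hindep
  exact hindep

theorem eq_infinitePi_of_forall_cylinder {μ : Measure E} [IsProbabilityMeasure μ]
    {P : Measure (ℕ → E)}
    (hP : ∀ (T : ℕ) (A : Fin T → Set E), (∀ i, MeasurableSet (A i)) →
      P {ω | ∀ i : Fin T, ω i ∈ A i} = ∏ i, μ (A i)) :
    P = Measure.infinitePi fun _ => μ := by
  classical
  refine Measure.eq_infinitePi _ fun s A hA => ?_
  obtain ⟨T, hsT⟩ := s.exists_nat_subset_range
  have hcyl : Set.pi s A = {ω | ∀ i : Fin T, ω i ∈ if (i : ℕ) ∈ s then A i else Set.univ} := by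
    ext ω
    simp only [Set.mem_pi, Finset.mem_coe, Set.mem_ofPred_eq]
    refine ⟨fun h i => ?_, fun h i hi => ?_⟩
    · split_ifs with hi
      exacts [h i hi, trivial]
    · simpa [hi] using h ⟨i, Finset.mem_range.1 (hsT hi)⟩
  rw [hcyl, hP T _ fun i => by split_ifs; exacts [hA i, .univ]]
  simp only [apply_ite μ, measure_univ]
  rw [Fin.prod_univ_eq_prod_range (fun i => if i ∈ s then μ (A i) else 1), Finset.prod_ite_mem,
    Finset.inter_eq_right.2 hsT]

theorem ae_forall_apply_mem_infinitePi {ι : Type*} [Countable ι] {μ : Measure E}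
    [IsProbabilityMeasure μ] {W : Set E} (hW : ∀ᵐ δ ∂μ, δ ∈ W) :
    ∀ᵐ ω ∂(Measure.infinitePi fun _ : ι => μ), ∀ i, ω i ∈ W :=
  ae_all_iff.2 fun j => (measurePreserving_eval_infinitePi _ j).quasiMeasurePreserving.ae hW

end Coordinates

section Trajectory

variable {n : ℕ} {g : (Fin n → ℝ) → (Fin n → ℝ) → (Fin n → ℝ)} {s₀ : Fin n → ℝ}
  {ω : ℕ → Fin n → ℝ}

theorem traj_mem_of_forall_apply_mem {S W : Set (Fin n → ℝ)} (hgS : ∀ s ∈ S, ∀ δ ∈ W, g s δ ∈ S)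
    (hs₀ : s₀ ∈ S) (hω : ∀ j, ω j ∈ W) (t : ℕ) : traj g s₀ ω t ∈ S := by
  induction t with
  | zero => exact hs₀
  | succ t ih => exact hgS _ ih _ (hω t)

theorem measurable_traj_coordFiltration (hg : Measurable (Function.uncurry g)) (s₀ : Fin n → ℝ)
    (t : ℕ) : Measurable[coordFiltration (Fin n → ℝ) t] fun ω => traj g s₀ ω t := by
  induction t with
  | zero => exact measurable_const
  | succ t ih =>
    exact hg.comp (((ih.mono ((coordFiltration _).mono t.le_succ) le_rfl)).prodMk
      (measurable_coordFiltration_apply t.lt_succ_self))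

variable {Su : Set (Fin n → ℝ)}

theorem hitTime_le_of_mem {t : ℕ} (h : traj g s₀ ω t ∈ Su) : hitTime g Su s₀ ω ≤ t :=
  sInf_le ⟨t, rfl, h⟩

theorem traj_hitTime_mem {k : ℕ} (h : hitTime g Su s₀ ω = k) : traj g s₀ ω k ∈ Su := by
  have hne : {m : ℕ∞ | ∃ t : ℕ, (t : ℕ∞) = m ∧ traj g s₀ ω t ∈ Su}.Nonempty :=
    Set.nonempty_iff_ne_empty.2 fun h' => by simp [hitTime, h'] at h
  obtain ⟨t, ht, hmem⟩ := csInf_mem hne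
  rwa [← Nat.cast_inj.1 (ht.trans h)]

end Trajectory

section Stopped

variable {n : ℕ} {g : (Fin n → ℝ) → (Fin n → ℝ) → (Fin n → ℝ)} {Su : Set (Fin n → ℝ)}
  {s₀ : Fin n → ℝ} {ω : ℕ → Fin n → ℝ}

open Classical in
noncomputable def stoppedDynamics (g : (Fin n → ℝ) → (Fin n → ℝ) → (Fin n → ℝ))
    (Su : Set (Fin n → ℝ)) (s δ : Fin n → ℝ) : Fin n → ℝ :=
  if s ∈ Su then s else g s δ

theorem stoppedDynamics_of_mem {s : Fin n → ℝ} (hs : s ∈ Su) (δ : Fin n → ℝ) :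
    stoppedDynamics g Su s δ = s :=
  if_pos hs

theorem stoppedDynamics_of_notMem {s : Fin n → ℝ} (hs : s ∉ Su) (δ : Fin n → ℝ) :
    stoppedDynamics g Su s δ = g s δ :=
  if_neg hs

theorem measurable_stoppedDynamics (hg : Measurable (Function.uncurry g))
    (hSu : MeasurableSet Su) : Measurable (Function.uncurry (stoppedDynamics g Su)) :=
  Measurable.ite (measurable_fst hSu) measurable_fst hg

theorem traj_stoppedDynamics (t : ℕ) :
    traj (stoppedDynamics g Su) s₀ ω t =
      traj g s₀ ω (min (t : ℕ∞) (hitTime g Su s₀ ω)).toNat := by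
  induction t with
  | zero => simp [traj]
  | succ t ih =>
    rcases lt_or_ge (t : ℕ∞) (hitTime g Su s₀ ω) with hlt | hle
    · have hnotMem : traj g s₀ ω t ∉ Su := fun h => (hitTime_le_of_mem h).not_gt hlt
      rw [min_eq_left hlt.le, ENat.toNat_natCast] at ih
      rw [min_eq_left (by exact_mod_cast Order.add_one_le_of_lt hlt), ENat.toNat_natCast,
        traj, traj, ih, stoppedDynamics_of_notMem hnotMem]
    · obtain ⟨k, hk⟩ := ENat.ne_top_iff_exists.1 (hle.trans_lt (ENat.natCast_lt_top t)).ne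
      have hmem := traj_hitTime_mem hk.symm
      rw [← hk] at hle ih ⊢
      rw [min_eq_right hle, ENat.toNat_natCast] at ih
      rw [min_eq_right (hle.trans (by exact_mod_cast t.le_succ)), ENat.toNat_natCast, traj, ih,
        stoppedDynamics_of_mem hmem]

theorem stoppedDynamics_mem {S W : Set (Fin n → ℝ)} (hgS : ∀ s ∈ S, ∀ δ ∈ W, g s δ ∈ S) :
    ∀ s ∈ S, ∀ δ ∈ W, stoppedDynamics g Su s δ ∈ S := by
  intro s hs δ hδ
  by_cases hSu : s ∈ Su
  · rwa [stoppedDynamics_of_mem hSu]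
  · rw [stoppedDynamics_of_notMem hSu]
    exact hgS s hs δ hδ

theorem stoppedBarrier_eq_comp_traj (B : (Fin n → ℝ) → ℝ) (t : ℕ) :
    stoppedBarrier g Su B s₀ t ω = B (traj (stoppedDynamics g Su) s₀ ω t) := by
  rw [stoppedBarrier, traj_stoppedDynamics]

theorem integral_stoppedDynamics_le {μ : Measure (Fin n → ℝ)} [IsProbabilityMeasure μ]
    {B : (Fin n → ℝ) → ℝ} {S : Set (Fin n → ℝ)} (hdec : ∀ s ∈ S \ Su, ∫ δ, B (g s δ) ∂μ ≤ B s)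
    {s : Fin n → ℝ} (hs : s ∈ S) : ∫ δ, B (stoppedDynamics g Su s δ) ∂μ ≤ B s := by
  by_cases hSu : s ∈ Su
  · simp [stoppedDynamics_of_mem hSu]
  · simpa only [stoppedDynamics_of_notMem hSu] using hdec s ⟨hs, hSu⟩

end Stopped

theorem supermartingale_comp_traj {n : ℕ} {g : (Fin n → ℝ) → (Fin n → ℝ) → (Fin n → ℝ)}
    {μ : Measure (Fin n → ℝ)} [IsProbabilityMeasure μ] (hg : Measurable (Function.uncurry g))
    {B : (Fin n → ℝ) → ℝ} (hB : Measurable B) {C : ℝ} (hBC : ∀ s, |B s| ≤ C) (s₀ : Fin n → ℝ)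
    (hdrift : ∀ t, ∀ᵐ ω ∂(Measure.infinitePi fun _ => μ),
      ∫ δ, B (g (traj g s₀ ω t) δ) ∂μ ≤ B (traj g s₀ ω t)) :
    Supermartingale (fun t ω => B (traj g s₀ ω t)) (coordFiltration (Fin n → ℝ))
      (Measure.infinitePi fun _ => μ) := by
  set P := Measure.infinitePi fun _ : ℕ => μ
  have htraj (t : ℕ) := measurable_traj_coordFiltration hg s₀ t
  have hint (t : ℕ) : Integrable (fun ω => B (traj g s₀ ω t)) P :=
    .of_bound (((hB.comp (htraj t)).mono ((coordFiltration _).le t) le_rfl).aestronglyMeasurable) C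
      (.of_forall fun _ => hBC _)
  have hint_drift (t : ℕ) : Integrable (fun ω => ∫ δ, B (g (traj g s₀ ω t) δ) ∂μ) P :=
    .of_bound (((hB.comp hg).stronglyMeasurable.integral_prod_right' (ν := μ)).comp_measurable
        ((htraj t).mono ((coordFiltration _).le t) le_rfl)).aestronglyMeasurable C
      (.of_forall fun ω => by
        simpa using norm_integral_le_of_norm_le_const (μ := μ)
          (f := fun δ => B (g (traj g s₀ ω t) δ)) (.of_forall fun δ => hBC _))
  refine supermartingale_of_setIntegral_succ_le (fun t => (hB.comp (htraj t)).stronglyMeasurable)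
    hint fun t A hA => ?_
  calc ∫ ω in A, B (traj g s₀ ω (t + 1)) ∂P
      = ∫ ω in A, ∫ δ, B (g (traj g s₀ ω t) δ) ∂(P.map fun ω => ω t) ∂P :=
        setIntegral_comp_prod_of_indep ((coordFiltration _).le t) (htraj t) (measurable_pi_apply t)
          (indep_coordFiltration_comap_apply μ t) hA (hB.comp hg).stronglyMeasurable fun _ => hBC _
    _ = ∫ ω in A, ∫ δ, B (g (traj g s₀ ω t) δ) ∂μ ∂P := by
        rw [Measure.infinitePi_map_eval]
    _ ≤ ∫ ω in A, B (traj g s₀ ω t) ∂P :=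
        setIntegral_mono_ae (hint_drift t).integrableOn (hint t).integrableOn (hdrift t)

theorem stopped_barrier_nonneg_supermartingale_general
    {n : ℕ} (S Su W : Set (Fin n → ℝ))
    (g : (Fin n → ℝ) → (Fin n → ℝ) → (Fin n → ℝ))
    (μ : Measure (Fin n → ℝ)) [IsProbabilityMeasure μ]
    (hSu : MeasurableSet Su)
    (hg : Measurable (Function.uncurry g))
    -- `W` is the support of the noise distribution `μ`
    (hW : W = {δ | ∀ U : Set (Fin n → ℝ), IsOpen U → δ ∈ U → 0 < μ U})
    (hgS : ∀ s ∈ S, ∀ δ ∈ W, g s δ ∈ S)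
    -- `P` is the countable product measure `μ^⊗ℕ` on noise sequences,
    -- characterized by its values on finite cylinders
    (P : Measure (ℕ → Fin n → ℝ)) [IsProbabilityMeasure P]
    (hP : ∀ (T : ℕ) (A : Fin T → Set (Fin n → ℝ)), (∀ i, MeasurableSet (A i)) →
      P {ω | ∀ i : Fin T, ω (i : ℕ) ∈ A i} = ∏ i, μ (A i))
    -- the barrier certificate candidate: a bounded Borel-measurable function
    (B : (Fin n → ℝ) → ℝ) (hBmeas : Measurable B) (hBbdd : ∃ C, ∀ s, |B s| ≤ C)
    (hnonneg : ∀ s ∈ S, 0 ≤ B s)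
    (hdec : ∀ s ∈ S \ Su, ∫ δ, B (g s δ) ∂μ ≤ B s)
    (s₀ : Fin n → ℝ) (hs₀ : s₀ ∈ S) :
    Supermartingale (stoppedBarrier g Su B s₀) (coordFiltration (Fin n → ℝ)) P ∧
      ∀ t : ℕ, 0 ≤ᵐ[P] stoppedBarrier g Su B s₀ t := by
  obtain ⟨C, hC⟩ := hBbdd
  obtain rfl := eq_infinitePi_of_forall_cylinder hP
  have hW_support : W = μ.support := by
    simp only [hW, Measure.support_eq_forall_isOpen, imp.swap]
  have hstays : ∀ᵐ ω ∂(Measure.infinitePi fun _ => μ), ∀ t,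
      traj (stoppedDynamics g Su) s₀ ω t ∈ S := by
    filter_upwards [ae_forall_apply_mem_infinitePi (hW_support ▸ Measure.support_mem_ae)]
      with ω hω
    exact traj_mem_of_forall_apply_mem (stoppedDynamics_mem hgS) hs₀ hω
  have hstopped : stoppedBarrier g Su B s₀ =
      fun t ω => B (traj (stoppedDynamics g Su) s₀ ω t) :=
    funext fun t => funext fun _ => stoppedBarrier_eq_comp_traj B t
  rw [hstopped]
  exact ⟨supermartingale_comp_traj (measurable_stoppedDynamics hg hSu) hBmeas hC s₀ fun t =>
      hstays.mono fun ω hω => integral_stoppedDynamics_le hdec (hω t),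
    fun t => hstays.mono fun ω hω => hnonneg _ (hω t)⟩

/-- The stopped barrier process is a nonnegative supermartingale. -/
theorem stopped_barrier_nonneg_supermartingale
    {n : ℕ} (S S₀ Su W : Set (Fin n → ℝ))
    (g : (Fin n → ℝ) → (Fin n → ℝ) → (Fin n → ℝ))
    (μ : Measure (Fin n → ℝ)) [IsProbabilityMeasure μ]
    (hS : MeasurableSet S) (hS₀ : MeasurableSet S₀) (hSu : MeasurableSet Su)
    (hS₀S : S₀ ⊆ S) (hSuS : Su ⊆ S) (hdisj : S₀ ∩ Su = ∅)
    (hg : Measurable (Function.uncurry g))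
    -- `W` is the support of the noise distribution `μ`
    (hW : W = {δ | ∀ U : Set (Fin n → ℝ), IsOpen U → δ ∈ U → 0 < μ U})
    (hgS : ∀ s ∈ S, ∀ δ ∈ W, g s δ ∈ S)
    -- `P` is the countable product measure `μ^⊗ℕ` on noise sequences,
    -- characterized by its values on finite cylinders
    (P : Measure (ℕ → Fin n → ℝ)) [IsProbabilityMeasure P]
    (hP : ∀ (T : ℕ) (A : Fin T → Set (Fin n → ℝ)), (∀ i, MeasurableSet (A i)) →
      P {ω | ∀ i : Fin T, ω (i : ℕ) ∈ A i} = ∏ i, μ (A i))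
    -- the barrier certificate candidate: a bounded Borel-measurable function
    (B : (Fin n → ℝ) → ℝ) (hBmeas : Measurable B) (hBbdd : ∃ C, ∀ s, |B s| ≤ C)
    (hnonneg : ∀ s ∈ S, 0 ≤ B s)
    (hdec : ∀ s ∈ S \ Su, ∫ δ, B (g s δ) ∂μ ≤ B s)
    (s₀ : Fin n → ℝ) (hs₀ : s₀ ∈ S) :
    Supermartingale (stoppedBarrier g Su B s₀) (coordFiltration (Fin n → ℝ)) P ∧
      ∀ t : ℕ, 0 ≤ᵐ[P] stoppedBarrier g Su B s₀ t :=
  stopped_barrier_nonneg_supermartingale_general S Su W g μ hSu hg hW hgS P hP B hBmeas hBbdd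
    hnonneg hdec s₀ hs₀
end
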